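/- arXiv:1701.05030 — 3 statements merged into one kernel-verified Lean document; each statement's English description precedes it below -/
import Mathlib

section
/- For every integer n ≥ 1, La(n, {∨, ∧}, P_2) = C(n−1, ⌊(n−1)/2⌋): the maximum, over all families ℱ ⊆ 2^[n] containing no copy of ∨ and no copy of ∧, of the number of copies of P_2 in ℱ (i.e. of pairs of distinct sets A, B ∈ ℱ with A ⊆ B) equals C(n−1, ⌊(n−1)/2⌋). -/
open Classical Finset

noncomputable section

/-- `G` is a copy of the finite poset `α` among the subsets of `[n]`:
there is a bijection `φ` from `α` onto `G` such that `x ≤ y` implies `φ x ⊆ φ y`. -/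
def IsCopy (α : Type) [PartialOrder α] [Fintype α] {n : ℕ}
    (G : Finset (Finset (Fin n))) : Prop :=
  ∃ φ : α → Finset (Fin n), Function.Injective φ ∧
    Finset.image φ Finset.univ = G ∧ ∀ x y : α, x ≤ y → φ x ⊆ φ y

/-- `copyCount α F` is the number of copies of the poset `α` in the family `F`,
copies being counted as subfamilies of `F`. -/
def copyCount (α : Type) [PartialOrder α] [Fintype α] {n : ℕ}
    (F : Finset (Finset (Fin n))) : ℕ :=
  (F.powerset.filter fun G => IsCopy α G).card

/-- `La n P Q`: the maximum number of copies of `Q` in a `P`-free family of subsets of `[n]`. -/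
def La (n : ℕ) (P Q : Type) [PartialOrder P] [Fintype P]
    [PartialOrder Q] [Fintype Q] : ℕ :=
  ((Finset.univ : Finset (Finset (Finset (Fin n)))).filter fun F =>
    copyCount P F = 0).sup (copyCount Q)

/-- `La2 n P₁ P₂ Q`: the maximum number of copies of `Q` in a family of subsets of `[n]`
that is both `P₁`-free and `P₂`-free. -/
def La2 (n : ℕ) (P₁ P₂ Q : Type) [PartialOrder P₁] [Fintype P₁]
    [PartialOrder P₂] [Fintype P₂] [PartialOrder Q] [Fintype Q] : ℕ :=
  ((Finset.univ : Finset (Finset (Finset (Fin n)))).filter fun F =>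
    copyCount P₁ F = 0 ∧ copyCount P₂ F = 0).sup (copyCount Q)

/-- the full `k`-th level of `2^[n]`. -/
def level (n k : ℕ) : Finset (Finset (Fin n)) :=
  Finset.univ.filter fun A => A.card = k

/-- `γ^r_{i,j}(F)`: the number of `r`-element subfamilies of `F` whose intersection has
size `i` and whose union has size `j`. -/
def gammaCount (r n i j : ℕ) (F : Finset (Finset (Fin n))) : ℕ :=
  (F.powerset.filter fun G =>
    G.card = r ∧ (G.inf id).card = i ∧ (G.sup id).card = j).card

/-- `β^r_i(F)`: the number of `r`-element subfamilies of `F` whose intersection has size `i`. -/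
def betaCount (r n i : ℕ) (F : Finset (Finset (Fin n))) : ℕ :=
  (F.powerset.filter fun G => G.card = r ∧ (G.inf id).card = i).card

/-- the complete multi-level poset `K_{r 0, …, r (s-1)}`: level `i` has `r i` elements,
and every element of level `i` is below every element of level `j` whenever `i < j`. -/
def KP {s : ℕ} (r : Fin s → ℕ) : Type := Σ i, Fin (r i)

namespace KP

variable {s : ℕ} {r : Fin s → ℕ}

def le (x y : KP r) : Prop := x = y ∨ x.1 < y.1

instance : PartialOrder (KP r) where
  le := KP.le
  le_refl x := Or.inl rfl
  le_trans x y z hxy hyz := by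
    rcases hxy with rfl | h
    · exact hyz
    · rcases hyz with rfl | h'
      · exact Or.inr h
      · exact Or.inr (h.trans h')
  le_antisymm x y hxy hyx := by
    rcases hxy with rfl | h
    · rfl
    · rcases hyx with rfl | h'
      · rfl
      · exact absurd (h.trans h') (lt_irrefl _)

instance : Fintype (KP r) := inferInstanceAs (Fintype (Σ i, Fin (r i)))

end KP

/-- the chain (totally ordered poset) with `k` elements. -/
abbrev PChain (k : ℕ) := Fin k

/-- `∨_r = K_{1,r}` -/
abbrev VeePoset (r : ℕ) := KP ![1, r]

/-- `∧_r = K_{r,1}` -/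
abbrev WedgePoset (r : ℕ) := KP ![r, 1]

/-- the generalized diamond `D_r = K_{1,r,1}` -/
abbrev DiamondPoset (r : ℕ) := KP ![1, r, 1]

/-- the butterfly poset `B = K_{2,2}` -/
abbrev Butterfly := KP ![2, 2]

/-- the height `l(Q)` of a finite poset: the number of elements of a longest chain. -/
def height (Q : Type) [PartialOrder Q] [Fintype Q] : ℕ :=
  ((Finset.univ : Finset (Finset Q)).filter fun C : Finset Q =>
    IsChain (· ≤ ·) (↑C : Set Q)).sup Finset.card


/-- `Q₁ ⊗_r Q₂`: disjoint copies of `Q₁` and `Q₂` with an `r`-element antichain in between;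
everything in `Q₁` is below the middle elements and below everything in `Q₂`,
and the middle elements are below everything in `Q₂`. -/
inductive Otimes (Q₁ Q₂ : Type) (r : ℕ) : Type
  | bot : Q₁ → Otimes Q₁ Q₂ r
  | mid : Fin r → Otimes Q₁ Q₂ r
  | top : Q₂ → Otimes Q₁ Q₂ r

namespace Otimes

variable {Q₁ Q₂ : Type} {r : ℕ}

def le [PartialOrder Q₁] [PartialOrder Q₂] : Otimes Q₁ Q₂ r → Otimes Q₁ Q₂ r → Prop
  | bot a, bot b => a ≤ b
  | bot _, mid _ => True
  | bot _, top _ => True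
  | mid i, mid j => i = j
  | mid _, top _ => True
  | top a, top b => a ≤ b
  | _, _ => False

instance [PartialOrder Q₁] [PartialOrder Q₂] : PartialOrder (Otimes Q₁ Q₂ r) where
  le := Otimes.le
  le_refl x := by cases x <;> simp [Otimes.le]
  le_trans x y z hxy hyz := by
    cases x <;> cases y <;> cases z <;> simp_all [Otimes.le] <;>
      first
        | exact le_trans hxy hyz
        | trivial
  le_antisymm x y hxy hyx := by
    cases x <;> cases y <;> simp_all [Otimes.le] <;>
      first
        | exact le_antisymm hxy hyx
        | rfl

instance [Fintype Q₁] [Fintype Q₂] : Fintype (Otimes Q₁ Q₂ r) :=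
  Fintype.ofEquiv (Q₁ ⊕ Fin r ⊕ Q₂)
    { toFun := fun x => match x with
        | Sum.inl a => bot a
        | Sum.inr (Sum.inl i) => mid i
        | Sum.inr (Sum.inr b) => top b
      invFun := fun x => match x with
        | bot a => Sum.inl a
        | mid i => Sum.inr (Sum.inl i)
        | top b => Sum.inr (Sum.inr b)
      left_inv := fun x => by rcases x with a | (i | b) <;> rfl
      right_inv := fun x => by cases x <;> rfl }

end Otimes

/-- `Q ⊕ r`: the poset obtained from `Q` by adding an antichain of `r` new elements,
each above every element of `Q`. -/
inductive Oplus (Q : Type) (r : ℕ) : Type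
  | base : Q → Oplus Q r
  | new : Fin r → Oplus Q r

namespace Oplus

variable {Q : Type} {r : ℕ}

def le [PartialOrder Q] : Oplus Q r → Oplus Q r → Prop
  | base a, base b => a ≤ b
  | base _, new _ => True
  | new i, new j => i = j
  | new _, base _ => False

instance [PartialOrder Q] : PartialOrder (Oplus Q r) where
  le := Oplus.le
  le_refl x := by cases x <;> simp [Oplus.le]
  le_trans x y z hxy hyz := by
    cases x <;> cases y <;> cases z <;> simp_all [Oplus.le] <;>
      first
        | exact le_trans hxy hyz
        | trivial
  le_antisymm x y hxy hyx := by
    cases x <;> cases y <;> simp_all [Oplus.le] <;>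
      first
        | exact le_antisymm hxy hyx
        | rfl

instance [Fintype Q] : Fintype (Oplus Q r) :=
  Fintype.ofEquiv (Q ⊕ Fin r)
    { toFun := fun x => match x with
        | Sum.inl a => base a
        | Sum.inr i => new i
      invFun := fun x => match x with
        | base a => Sum.inl a
        | new i => Sum.inr i
      left_inv := fun x => by rcases x with a | i <;> rfl
      right_inv := fun x => by cases x <;> rfl }

end Oplus

/-- the poset `N`: four elements `a, b, c, d` with `a ≤ c`, `b ≤ c`, `b ≤ d`
and no other nontrivial relations. -/
inductive NPoset : Type
  | a | b | c | d
  deriving DecidableEq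

instance : Fintype NPoset :=
  ⟨{NPoset.a, NPoset.b, NPoset.c, NPoset.d}, fun x => by cases x <;> simp⟩

namespace NPoset

def le : NPoset → NPoset → Prop := fun x y =>
  x = y ∨ (x = a ∧ y = c) ∨ (x = b ∧ y = c) ∨ (x = b ∧ y = d)

instance : DecidableRel le := fun x y => by unfold le; infer_instance

theorem le_refl' : ∀ x : NPoset, le x x := by decide
theorem le_trans' : ∀ x y z : NPoset, le x y → le y z → le x z := by decide
theorem le_antisymm' : ∀ x y : NPoset, le x y → le y x → x = y := by decide

instance : PartialOrder NPoset :=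
  { le := le, le_refl := le_refl', le_trans := le_trans', le_antisymm := le_antisymm' }

end NPoset

/-- the poset `B⁺`: five elements with `a < c`, `a < e`, `b < c`, `b < d`, `d < e`
(and the relation `b < e` forced by transitivity). -/
inductive BPlusPoset : Type
  | a | b | c | d | e
  deriving DecidableEq

instance : Fintype BPlusPoset :=
  ⟨{BPlusPoset.a, BPlusPoset.b, BPlusPoset.c, BPlusPoset.d, BPlusPoset.e}, fun x => by cases x <;> simp⟩

namespace BPlusPoset

def le : BPlusPoset → BPlusPoset → Prop := fun x y =>
  x = y ∨ (x = a ∧ y = c) ∨ (x = a ∧ y = e) ∨ (x = b ∧ y = c) ∨ (x = b ∧ y = d) ∨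
    (x = b ∧ y = e) ∨ (x = d ∧ y = e)

instance : DecidableRel le := fun x y => by unfold le; infer_instance

theorem le_refl' : ∀ x : BPlusPoset, le x x := by decide
theorem le_trans' : ∀ x y z : BPlusPoset, le x y → le y z → le x z := by decide
theorem le_antisymm' : ∀ x y : BPlusPoset, le x y → le y x → x = y := by decide

instance : PartialOrder BPlusPoset :=
  { le := le, le_refl := le_refl', le_trans := le_trans', le_antisymm := le_antisymm' }

end BPlusPoset

/-- the poset `B⁺⁺`: five elements with `a, b < c, d` and `d < e`
(hence also `a < e` and `b < e`). -/
inductive BPlusPlusPoset : Type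
  | a | b | c | d | e
  deriving DecidableEq

instance : Fintype BPlusPlusPoset :=
  ⟨{BPlusPlusPoset.a, BPlusPlusPoset.b, BPlusPlusPoset.c, BPlusPlusPoset.d, BPlusPlusPoset.e}, fun x => by cases x <;> simp⟩

namespace BPlusPlusPoset

def le : BPlusPlusPoset → BPlusPlusPoset → Prop := fun x y =>
  x = y ∨ (x = a ∧ y = c) ∨ (x = a ∧ y = d) ∨ (x = a ∧ y = e) ∨ (x = b ∧ y = c) ∨
    (x = b ∧ y = d) ∨ (x = b ∧ y = e) ∨ (x = d ∧ y = e)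

instance : DecidableRel le := fun x y => by unfold le; infer_instance

theorem le_refl' : ∀ x : BPlusPlusPoset, le x x := by decide
theorem le_trans' : ∀ x y z : BPlusPlusPoset, le x y → le y z → le x z := by decide
theorem le_antisymm' : ∀ x y : BPlusPlusPoset, le x y → le y x → x = y := by decide

instance : PartialOrder BPlusPlusPoset :=
  { le := le, le_refl := le_refl', le_trans := le_trans', le_antisymm := le_antisymm' }

end BPlusPlusPoset

/-- the binary entropy function `h(x) = -x log₂ x - (1-x) log₂ (1-x)`. -/
def binEnt (x : ℝ) : ℝ := -x * Real.logb 2 x - (1 - x) * Real.logb 2 (1 - x)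

/-!
A family is `∨`- and `∧`-free exactly when each member is comparable with at most one other
member. Count maximal chains of `2^[n]`, i.e. permutations of `[n]`: to a comparable pair `A ⊂ B`
attach the chains passing through `A` or `B`. Two members lying on a common chain are comparable,
so the chains attached to different pairs are disjoint. By inclusion–exclusion a pair with
`#A = a < b = #B` gets `a!(n-a)! + b!(n-b)! - a!(b-a)!(n-b)!` chains, and this is at least
`n! / C(n-1, ⌊(n-1)/2⌋)`. For the lower bound take the sets of size `⌊(n-1)/2⌋` avoiding
a fixed point `t` together with their extensions by `t`: the comparable pairs are exactly
`A ⊂ insert t A`.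
-/

open Equiv (Perm)
open Relation

-- Computable instances, so that `decide` can enumerate `∨` and `∧` despite `open Classical`.
instance {s : ℕ} {r : Fin s → ℕ} : DecidableEq (KP r) :=
  inferInstanceAs (DecidableEq (Σ i, Fin (r i)))

instance {s : ℕ} {r : Fin s → ℕ} : DecidableRel ((· ≤ ·) : KP r → KP r → Prop) :=
  fun x y => inferInstanceAs (Decidable (x = y ∨ x.1 < y.1))

section Copies

variable {α : Type} [PartialOrder α] [Fintype α] {n : ℕ} {F : Finset (Finset (Fin n))}

theorem copyCount_eq_zero_iff : copyCount α F = 0 ↔ ∀ G ⊆ F, ¬ IsCopy α G := by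
  simp [copyCount, filter_eq_empty_iff]

theorem copyCount_ne_zero_of_injective {φ : α → Finset (Fin n)} (hφ : Function.Injective φ)
    (hmono : Monotone φ) (hF : ∀ x, φ x ∈ F) : copyCount α F ≠ 0 := by
  rw [Ne, copyCount_eq_zero_iff, not_forall]
  refine ⟨univ.image φ, ?_⟩
  simpa [subset_iff] using ⟨hF, φ, hφ, rfl, fun _ _ h => hmono h⟩

theorem isCopy_chain_two_iff {G : Finset (Finset (Fin n))} :
    IsCopy (PChain 2) G ↔ ∃ A B, A ⊂ B ∧ G = {A, B} := by
  constructor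
  · rintro ⟨φ, hφ, rfl, hmono⟩
    refine ⟨φ 0, φ 1, (hmono 0 1 zero_le_one).ssubset_of_ne (hφ.ne zero_ne_one), ?_⟩
    ext; simp [Fin.exists_fin_two, eq_comm]
  · rintro ⟨A, B, hAB, rfl⟩
    refine ⟨![A, B], ?_, ?_, ?_⟩
    · intro i j; fin_cases i <;> fin_cases j <;> simp [hAB.ne, hAB.ne']
    · ext; simp [Fin.exists_fin_two, eq_comm]
    · intro i j; fin_cases i <;> fin_cases j <;> simp [hAB.subset]

end Copies

def IsComparabilityMatching {β : Type*} [Preorder β] (F : Finset β) : Prop :=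
  ∀ ⦃S T U⦄, S ∈ F → T ∈ F → U ∈ F → T ≠ S → U ≠ S →
    SymmGen (· ≤ ·) S T → SymmGen (· ≤ ·) S U → T = U

section Matching

variable {α : Type} [PartialOrder α] [Fintype α] {n : ℕ} {F : Finset (Finset (Fin n))}

theorem IsComparabilityMatching.copyCount_eq_zero (hF : IsComparabilityMatching F)
    (h : ∃ x y z : α, y ≠ x ∧ z ≠ x ∧ y ≠ z ∧ SymmGen (· ≤ ·) x y ∧ SymmGen (· ≤ ·) x z) :
    copyCount α F = 0 := by
  rw [copyCount_eq_zero_iff]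
  rintro G hGF ⟨φ, hφ, rfl, hmono⟩
  obtain ⟨x, y, z, hyx, hzx, hyz, hxy, hxz⟩ := h
  have hmem (w : α) : φ w ∈ F := hGF (mem_image_of_mem φ (mem_univ w))
  have hcomp {v w : α} (h : SymmGen (· ≤ ·) v w) : SymmGen (· ≤ ·) (φ v) (φ w) :=
    h.elim (fun h => .of_le (hmono _ _ h)) (fun h => .of_ge (hmono _ _ h))
  exact hφ.ne hyz (hF (hmem x) (hmem y) (hmem z) (hφ.ne hyx) (hφ.ne hzx) (hcomp hxy) (hcomp hxz))

theorem copyCount_vee_ne_zero {A B C : Finset (Fin n)} (hA : A ∈ F) (hB : B ∈ F) (hC : C ∈ F)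
    (hAB : A ⊂ B) (hAC : A ⊂ C) (hBC : B ≠ C) : copyCount (VeePoset 2) F ≠ 0 := by
  let idx (x : VeePoset 2) : Fin 3 := if x.1 = 0 then 0 else if (x.2 : ℕ) = 0 then 1 else 2
  have hidx : Function.Injective idx := by decide
  have hle : ∀ x y, x ≤ y → idx x = idx y ∨ idx x = 0 := by decide
  have hφ : Function.Injective ![A, B, C] := by
    intro i j
    fin_cases i <;> fin_cases j <;> simp [hAB.ne, hAC.ne, hBC, hAB.ne', hAC.ne', hBC.symm]
  refine copyCount_ne_zero_of_injective (φ := ![A, B, C] ∘ idx) (hφ.comp hidx) ?_ ?_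
  · intro x y hxy
    obtain h | h := hle x y hxy
    · simp [h]
    · simp only [Function.comp_apply, h]
      generalize idx y = i
      fin_cases i <;> simp [hAB.subset, hAC.subset]
  · have hmem (i : Fin 3) : ![A, B, C] i ∈ F := by fin_cases i <;> assumption
    exact fun x => hmem (idx x)

theorem copyCount_wedge_ne_zero {A B C : Finset (Fin n)} (hA : A ∈ F) (hB : B ∈ F) (hC : C ∈ F)
    (hAC : A ⊂ C) (hBC : B ⊂ C) (hAB : A ≠ B) : copyCount (WedgePoset 2) F ≠ 0 := by
  let idx (x : WedgePoset 2) : Fin 3 := if x.1 = 1 then 2 else if (x.2 : ℕ) = 0 then 0 else 1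
  have hidx : Function.Injective idx := by decide
  have hle : ∀ x y, x ≤ y → idx x = idx y ∨ idx y = 2 := by decide
  have hφ : Function.Injective ![A, B, C] := by
    intro i j
    fin_cases i <;> fin_cases j <;> simp [hAB, hAC.ne, hBC.ne, hAB.symm, hAC.ne', hBC.ne']
  refine copyCount_ne_zero_of_injective (φ := ![A, B, C] ∘ idx) (hφ.comp hidx) ?_ ?_
  · intro x y hxy
    obtain h | h := hle x y hxy
    · simp [h]
    · simp only [Function.comp_apply, h]
      generalize idx x = i
      fin_cases i <;> simp [hAC.subset, hBC.subset]
  · have hmem (i : Fin 3) : ![A, B, C] i ∈ F := by fin_cases i <;> assumption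
    exact fun x => hmem (idx x)

theorem isComparabilityMatching_iff_copyCount_eq_zero :
    IsComparabilityMatching F ↔ copyCount (VeePoset 2) F = 0 ∧ copyCount (WedgePoset 2) F = 0 := by
  refine ⟨fun hF => ⟨hF.copyCount_eq_zero (by decide), hF.copyCount_eq_zero (by decide)⟩, ?_⟩
  rintro ⟨hV, hW⟩ S T U hS hT hU hTS hUS hST hSU
  by_contra hTU
  rcases hST with hST | hST <;> rcases hSU with hSU | hSU
  · exact copyCount_vee_ne_zero hS hT hU (hST.lt_of_ne hTS.symm) (hSU.lt_of_ne hUS.symm) hTU hV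
  · exact copyCount_vee_ne_zero hU hS hT (hSU.lt_of_ne hUS) ((hSU.trans hST).lt_of_ne (Ne.symm hTU))
      hTS.symm hV
  · exact copyCount_vee_ne_zero hT hS hU (hST.lt_of_ne hTS) ((hST.trans hSU).lt_of_ne hTU)
      hUS.symm hV
  · exact copyCount_wedge_ne_zero hT hU hS (hST.lt_of_ne hTS) (hSU.lt_of_ne hUS) hTU hW

end Matching

open scoped Nat

namespace Nat

theorem factorial_le_choose_middle_mul {m k : ℕ} (hk : k ≤ m) :
    m ! ≤ m.choose (m / 2) * (k ! * (m - k)!) := by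
  rw [← choose_mul_factorial_mul_factorial hk, mul_assoc]
  exact Nat.mul_le_mul_right _ (choose_le_middle k m)

theorem factorial_succ_mul_factorial_succ_le (i j : ℕ) : (i + 1)! * (j + 1)! ≤ (i + j + 1)! := by
  have hchoose : i + 1 ≤ (i + (j + 1)).choose i := by
    calc i + 1 = (i + 1).choose i := (choose_succ_self_right i).symm
      _ ≤ (i + (j + 1)).choose i := choose_le_choose i (by omega)
  calc (i + 1)! * (j + 1)! = (i + 1) * (i ! * (j + 1)!) := by rw [factorial_succ, mul_assoc]
    _ ≤ (i + (j + 1)).choose i * (i ! * (j + 1)!) := Nat.mul_le_mul_right _ hchoose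
    _ = (i + (j + 1)).choose (j + 1) * i ! * (j + 1)! := by rw [choose_symm_add, mul_assoc]
    _ = (i + j + 1)! := add_choose_mul_factorial_mul_factorial i (j + 1)

/-- `1 / C(n, a) + 1 / C(n, b) - a! (b - a)! (n - b)! / n! ≥ 1 / C(n - 1, ⌊(n - 1) / 2⌋)`,
cleared of denominators. -/
theorem factorial_add_choose_middle_mul_le {a b n : ℕ} (hab : a < b) (hbn : b ≤ n) :
    n ! + (n - 1).choose ((n - 1) / 2) * (a ! * (b - a)! * (n - b)!) ≤
      (n - 1).choose ((n - 1) / 2) * (a ! * (n - a)! + b ! * (n - b)!) := by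
  obtain rfl | hbn := hbn.eq_or_lt
  · have hM : 1 ≤ (b - 1).choose ((b - 1) / 2) := choose_pos (div_le_self _ _)
    simp only [Nat.sub_self, factorial_zero, mul_one, mul_add]
    nlinarith [factorial_pos b]
  obtain ⟨i, rfl⟩ : ∃ i, b = a + i + 1 := ⟨b - a - 1, by omega⟩
  obtain ⟨j, rfl⟩ : ∃ j, n = a + i + j + 1 + 1 := ⟨n - a - i - 2, by omega⟩
  rw [show a + i + j + 1 + 1 - 1 = a + i + j + 1 by omega, show a + i + 1 - a = i + 1 by omega,
    show a + i + j + 1 + 1 - (a + i + 1) = j + 1 by omega,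
    show a + i + j + 1 + 1 - a = i + j + 1 + 1 by omega, factorial_succ (a + i + j + 1),
    factorial_succ (i + j + 1)]
  set M := (a + i + j + 1).choose ((a + i + j + 1) / 2)
  set p := (a + i + j + 1)!
  set X := M * (a ! * (i + j + 1)!)
  have hpX : p ≤ X := by
    simpa only [show a + i + j + 1 - a = i + j + 1 by omega] using
      factorial_le_choose_middle_mul (m := a + i + j + 1) (k := a) (by omega)
  have hpB : (a + i + 1) * p ≤ M * ((a + i + 1)! * (j + 1)!) := by
    have := factorial_le_choose_middle_mul (m := a + i + j + 1) (k := a + i) (by omega)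
    rw [show a + i + j + 1 - (a + i) = j + 1 by omega] at this
    calc (a + i + 1) * p ≤ (a + i + 1) * (M * ((a + i)! * (j + 1)!)) := Nat.mul_le_mul_left _ this
      _ = M * ((a + i + 1)! * (j + 1)!) := by rw [factorial_succ (a + i)]; ring
  have hmid : M * (a ! * (i + 1)! * (j + 1)!) ≤ X := by
    rw [mul_assoc a !]
    exact Nat.mul_le_mul_left _ (Nat.mul_le_mul_left _ (factorial_succ_mul_factorial_succ_le i j))
  calc (a + i + j + 1 + 1) * p + M * (a ! * (i + 1)! * (j + 1)!)
      = (i + j + 1) * p + (a + 1) * p + M * (a ! * (i + 1)! * (j + 1)!) := by ring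
    _ ≤ (i + j + 1) * p + (a + i + 1) * p + M * (a ! * (i + 1)! * (j + 1)!) := by
        gcongr; omega
    _ ≤ (i + j + 1) * X + M * ((a + i + 1)! * (j + 1)!) + X := by gcongr
    _ = M * (a ! * ((i + j + 1 + 1) * (i + j + 1)!) + (a + i + 1)! * (j + 1)!) := by ring

end Nat

open Equiv in
theorem card_perm_comp_eq {α ι : Type*} [Fintype α] [DecidableEq α] [Fintype ι] [DecidableEq ι]
    (c d : α → ι) (h : ∀ i, Fintype.card {x // c x = i} = Fintype.card {x // d x = i}) :
    Fintype.card {σ : Perm α // d ∘ σ = c} = ∏ i, (Fintype.card {x // d x = i})! := by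
  let σ₀ : Perm α := ofFiberEquiv fun i => Fintype.equivOfCardEq (h i)
  have hσ₀ : d ∘ σ₀ = c := funext (ofFiberEquiv_map _)
  -- the solutions form the coset `stabilizer d * σ₀`
  rw [← DomMulAct.stabilizer_card d]
  refine Fintype.card_congr (subtypeEquiv (Equiv.mulRight σ₀⁻¹) fun σ => ?_)
  rw [← hσ₀]
  constructor
  · intro hσ; funext x; simpa using congrFun hσ (σ₀⁻¹ x)
  · intro hσ; funext x; simpa using congrFun hσ (σ₀ x)

section Chains

variable {n : ℕ} {A B : Finset (Fin n)}

def flagColour (A B : Finset (Fin n)) (x : Fin n) : Fin 3 :=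
  if x ∈ A then 0 else if x ∈ B then 1 else 2

theorem flagColour_eq_zero {x : Fin n} : flagColour A B x = 0 ↔ x ∈ A := by
  unfold flagColour; split_ifs <;> simp_all

theorem flagColour_eq_one {x : Fin n} : flagColour A B x = 1 ↔ x ∈ B \ A := by
  unfold flagColour; split_ifs <;> simp_all

theorem flagColour_eq_two (hAB : A ⊆ B) {x : Fin n} : flagColour A B x = 2 ↔ x ∈ Bᶜ := by
  have := @hAB x
  unfold flagColour; split_ifs <;> simp_all

theorem flagColour_eq_iff {A' B' : Finset (Fin n)} (hAB : A ⊆ B) (hAB' : A' ⊆ B') {x y : Fin n} :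
    flagColour A B x = flagColour A' B' y ↔ (x ∈ A ↔ y ∈ A') ∧ (x ∈ B ↔ y ∈ B') := by
  have := @hAB x; have := @hAB' y
  unfold flagColour; split_ifs <;> simp_all

theorem card_flagColour_fiber (hAB : A ⊆ B) (i : Fin 3) :
    Fintype.card {x // flagColour A B x = i} = ![#A, #B - #A, n - #B] i := by
  rw [Fintype.card_subtype]
  match i with
  | 0 => simp_rw [flagColour_eq_zero, filter_mem_eq_inter, univ_inter]; rfl
  | 1 => simp_rw [flagColour_eq_one, filter_mem_eq_inter, univ_inter, card_sdiff_of_subset hAB]; rfl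
  | 2 =>
    simp_rw [flagColour_eq_two hAB, filter_mem_eq_inter, univ_inter, card_compl, Fintype.card_fin]
    rfl

/-- The maximal chain `∅ ⊂ {σ 0} ⊂ {σ 0, σ 1} ⊂ ⋯` of `2^[n]` passes through `S`. -/
def PassesThrough (σ : Perm (Fin n)) (S : Finset (Fin n)) : Prop :=
  ∀ k, σ k ∈ S ↔ (k : ℕ) < #S

theorem PassesThrough.symmGen {σ : Perm (Fin n)} {S T : Finset (Fin n)} (hS : PassesThrough σ S)
    (hT : PassesThrough σ T) : SymmGen (· ≤ ·) S T := by
  have key {S T} (hS : PassesThrough σ S) (hT : PassesThrough σ T) (h : #S ≤ #T) : S ⊆ T :=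
    fun x hx => by simpa using (hT (σ.symm x)).2 (((hS (σ.symm x)).1 (by simpa)).trans_le h)
  obtain h | h := le_total #S #T
  exacts [Or.inl (key hS hT h), Or.inr (key hT hS h)]

theorem card_passesThrough_pair (hAB : A ⊆ B) :
    #{σ : Perm (Fin n) | PassesThrough σ A ∧ PassesThrough σ B} =
      (#A)! * (#B - #A)! * (n - #B)! := by
  set A' : Finset (Fin n) := {k | (k : ℕ) < #A}
  set B' : Finset (Fin n) := {k | (k : ℕ) < #B}
  have hA' : #A' = #A := by simpa [A', Fin.card_filter_val_lt] using card_le_univ A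
  have hB' : #B' = #B := by simpa [B', Fin.card_filter_val_lt] using card_le_univ B
  have hA'B' : A' ⊆ B' := fun k => by
    simp only [A', B', mem_filter, mem_univ, true_and]
    exact fun h => h.trans_le (card_le_card hAB)
  have hiff (σ : Perm (Fin n)) :
      PassesThrough σ A ∧ PassesThrough σ B ↔ flagColour A B ∘ σ = flagColour A' B' := by
    simp only [funext_iff, Function.comp_apply, flagColour_eq_iff hAB hA'B', forall_and,
      PassesThrough, A', B', mem_filter, mem_univ, true_and]
  have hfib (i : Fin 3) : Fintype.card {x // flagColour A' B' x = i} =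
      Fintype.card {x // flagColour A B x = i} := by
    rw [card_flagColour_fiber hAB, card_flagColour_fiber hA'B', hA', hB']
  simp only [hiff, ← Fintype.card_subtype, card_perm_comp_eq _ _ hfib, Fin.prod_univ_three,
    card_flagColour_fiber hAB]
  rfl

theorem card_passesThrough (A : Finset (Fin n)) :
    #{σ : Perm (Fin n) | PassesThrough σ A} = (#A)! * (n - #A)! := by
  have huniv (σ : Perm (Fin n)) : PassesThrough σ univ := fun k => by simp
  simpa [huniv] using card_passesThrough_pair (subset_univ A)

end Chains

section UpperBound

variable {n : ℕ} {F : Finset (Finset (Fin n))}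

theorem IsComparabilityMatching.eq_or_eq_of_symmGen (hF : IsComparabilityMatching F)
    {A B X : Finset (Fin n)} (hA : A ∈ F) (hB : B ∈ F) (hX : X ∈ F) (hBA : B ≠ A)
    (hAB : SymmGen (· ≤ ·) A B) (hAX : SymmGen (· ≤ ·) A X) : X = A ∨ X = B :=
  or_iff_not_imp_left.2 fun hXA => hF hA hX hB hXA hBA hAX hAB

theorem IsComparabilityMatching.mem_pair_of_symmGen (hF : IsComparabilityMatching F)
    {A B X Y : Finset (Fin n)} (hA : A ∈ F) (hB : B ∈ F) (hAB : A ⊂ B)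
    (hX : X ∈ ({A, B} : Finset _)) (hY : Y ∈ F) (hXY : SymmGen (· ≤ ·) X Y) :
    Y ∈ ({A, B} : Finset _) := by
  rw [mem_insert, mem_singleton] at hX ⊢
  obtain rfl | rfl := hX
  · exact hF.eq_or_eq_of_symmGen hA hB hY hAB.ne' (.of_le hAB.le) hXY
  · exact (hF.eq_or_eq_of_symmGen hB hA hY hAB.ne (.of_ge hAB.le) hXY).symm

theorem IsComparabilityMatching.pair_eq_of_symmGen (hF : IsComparabilityMatching F)
    {A B A' B' X X' : Finset (Fin n)} (hA : A ∈ F) (hB : B ∈ F) (hA' : A' ∈ F) (hB' : B' ∈ F)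
    (hAB : A ⊂ B) (hAB' : A' ⊂ B') (hX : X ∈ ({A, B} : Finset _))
    (hX' : X' ∈ ({A', B'} : Finset _)) (hXX' : SymmGen (· ≤ ·) X X') :
    ({A', B'} : Finset _) = {A, B} := by
  have hF' : ({A', B'} : Finset _) ⊆ F := by simp [insert_subset_iff, hA', hB']
  have hX'AB : X' ∈ ({A, B} : Finset _) := hF.mem_pair_of_symmGen hA hB hAB hX (hF' hX') hXX'
  have hsub : ({A', B'} : Finset _) ⊆ {A, B} := by
    intro Y hY
    refine hF.mem_pair_of_symmGen hA hB hAB hX'AB (hF' hY) ?_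
    simp only [mem_insert, mem_singleton] at hX' hY
    rcases hX' with rfl | rfl <;> rcases hY with rfl | rfl
    exacts [.rfl, .of_le hAB'.le, .of_ge hAB'.le, .rfl]
  exact eq_of_subset_of_card_le hsub (by rw [card_pair hAB'.ne]; exact card_le_two)

theorem factorial_le_choose_middle_mul_card_passesThrough {A B : Finset (Fin n)} (hAB : A ⊂ B) :
    n ! ≤ (n - 1).choose ((n - 1) / 2) *
      #{σ : Perm (Fin n) | PassesThrough σ A ∨ PassesThrough σ B} := by
  have hunion := card_union_add_card_inter {σ : Perm (Fin n) | PassesThrough σ A}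
    {σ | PassesThrough σ B}
  rw [← filter_or, ← filter_and, card_passesThrough_pair hAB.subset, card_passesThrough,
    card_passesThrough] at hunion
  have hineq := Nat.factorial_add_choose_middle_mul_le (card_lt_card hAB)
    (by simpa using card_le_univ B)
  rw [← hunion, mul_add] at hineq
  omega

theorem IsComparabilityMatching.copyCount_chain_two_le (hF : IsComparabilityMatching F) :
    copyCount (PChain 2) F ≤ (n - 1).choose ((n - 1) / 2) := by
  set M := (n - 1).choose ((n - 1) / 2)
  set P := F.powerset.filter (IsCopy (PChain 2))
  let W (G : Finset (Finset (Fin n))) : Finset (Perm (Fin n)) := {σ | ∃ S ∈ G, PassesThrough σ S}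
  have hpair {G} (hG : G ∈ P) : ∃ A B, A ∈ F ∧ B ∈ F ∧ A ⊂ B ∧ G = {A, B} := by
    obtain ⟨hGF, hG⟩ := mem_filter.1 hG
    obtain ⟨A, B, hAB, rfl⟩ := isCopy_chain_two_iff.1 hG
    exact ⟨A, B, mem_powerset.1 hGF (by simp), mem_powerset.1 hGF (by simp), hAB, rfl⟩
  have hW : ∀ G ∈ P, n ! ≤ M * #(W G) := by
    intro G hG
    obtain ⟨A, B, -, -, hAB, rfl⟩ := hpair hG
    simpa [W] using factorial_le_choose_middle_mul_card_passesThrough hAB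
  have hdisj : (P : Set (Finset (Finset (Fin n)))).PairwiseDisjoint W := by
    intro G hG G' hG' hne
    obtain ⟨A, B, hA, hB, hAB, rfl⟩ := hpair hG
    obtain ⟨A', B', hA', hB', hAB', rfl⟩ := hpair hG'
    refine disjoint_left.2 fun σ hσ hσ' => hne ?_
    obtain ⟨X, hX, hσX⟩ := (mem_filter.1 hσ).2
    obtain ⟨X', hX', hσX'⟩ := (mem_filter.1 hσ').2
    exact (hF.pair_eq_of_symmGen hA hB hA' hB' hAB hAB' hX hX' (hσX.symmGen hσX')).symm
  have hcount : #P * n ! ≤ M * n ! :=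
    calc #P * n ! = ∑ _G ∈ P, n ! := by rw [sum_const, smul_eq_mul]
      _ ≤ ∑ G ∈ P, M * #(W G) := sum_le_sum hW
      _ = M * #(P.biUnion W) := by rw [card_biUnion hdisj, mul_sum]
      _ ≤ M * n ! := by
        gcongr
        simpa [Fintype.card_perm] using card_le_univ (P.biUnion W)
  exact Nat.le_of_mul_le_mul_right hcount (Nat.factorial_pos n)

end UpperBound

section LowerBound

variable {n : ℕ}

theorem isComparabilityMatching_of_ssubset (t : Fin n) {F : Finset (Finset (Fin n))}
    (hF : ∀ X ∈ F, ∀ Y ∈ F, X ⊂ Y → t ∉ X ∧ Y = insert t X) : IsComparabilityMatching F := by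
  intro S T U hS hT hU hTS hUS hST hSU
  rcases hST with hST | hST <;> rcases hSU with hSU | hSU
  · rw [(hF S hS T hT (hST.lt_of_ne hTS.symm)).2, (hF S hS U hU (hSU.lt_of_ne hUS.symm)).2]
  · refine absurd ?_ (hF S hS T hT (hST.lt_of_ne hTS.symm)).1
    rw [(hF U hU S hS (hSU.lt_of_ne hUS)).2]
    exact mem_insert_self t U
  · refine absurd ?_ (hF S hS U hU (hSU.lt_of_ne hUS.symm)).1
    rw [(hF T hT S hS (hST.lt_of_ne hTS)).2]
    exact mem_insert_self t T
  · obtain ⟨htT, hST⟩ := hF T hT S hS (hST.lt_of_ne hTS)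
    obtain ⟨htU, hSU⟩ := hF U hU S hS (hSU.lt_of_ne hUS)
    rw [← erase_insert htT, ← erase_insert htU, ← hST, ← hSU]

def doubledLevel (t : Fin n) (k : ℕ) : Finset (Finset (Fin n)) :=
  powersetCard k {t}ᶜ ∪ (powersetCard k {t}ᶜ).image (insert t)

variable {t : Fin n} {k : ℕ}

theorem notMem_of_mem_powersetCard_compl {A : Finset (Fin n)} (hA : A ∈ powersetCard k {t}ᶜ) :
    t ∉ A :=
  fun ht => by simpa using (mem_powersetCard.1 hA).1 ht

theorem doubledLevel_ssubset {X Y : Finset (Fin n)} (hX : X ∈ doubledLevel t k)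
    (hY : Y ∈ doubledLevel t k) (hXY : X ⊂ Y) : X ∈ powersetCard k {t}ᶜ ∧ Y = insert t X := by
  have hlt := card_lt_card hXY
  simp only [doubledLevel, mem_union, mem_image] at hX hY
  rcases hX with hX | ⟨A, hA, rfl⟩ <;> rcases hY with hY | ⟨B, hB, rfl⟩
  · rw [(mem_powersetCard.1 hX).2, (mem_powersetCard.1 hY).2] at hlt
    exact absurd hlt (lt_irrefl _)
  · have hXB : X = B := eq_of_subset_of_card_le
      ((subset_insert_iff_of_notMem (notMem_of_mem_powersetCard_compl hX)).1 hXY.subset)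
      (by rw [(mem_powersetCard.1 hX).2, (mem_powersetCard.1 hB).2])
    exact ⟨hX, hXB ▸ rfl⟩
  · rw [card_insert_of_notMem (notMem_of_mem_powersetCard_compl hA), (mem_powersetCard.1 hA).2,
      (mem_powersetCard.1 hY).2] at hlt
    omega
  · rw [card_insert_of_notMem (notMem_of_mem_powersetCard_compl hA),
      card_insert_of_notMem (notMem_of_mem_powersetCard_compl hB), (mem_powersetCard.1 hA).2,
      (mem_powersetCard.1 hB).2] at hlt
    exact absurd hlt (lt_irrefl _)

theorem isComparabilityMatching_doubledLevel : IsComparabilityMatching (doubledLevel t k) :=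
  isComparabilityMatching_of_ssubset t fun _ hX _ hY hXY =>
    have ⟨hXL, hY⟩ := doubledLevel_ssubset hX hY hXY
    ⟨notMem_of_mem_powersetCard_compl hXL, hY⟩

theorem copyCount_chain_two_doubledLevel :
    copyCount (PChain 2) (doubledLevel t k) = (n - 1).choose k := by
  have himage : (doubledLevel t k).powerset.filter (IsCopy (PChain 2)) =
      (powersetCard k {t}ᶜ).image fun A => {A, insert t A} := by
    ext G
    simp only [mem_filter, mem_powerset, isCopy_chain_two_iff, mem_image]
    constructor
    · rintro ⟨hGF, A, B, hAB, rfl⟩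
      obtain ⟨hA, rfl⟩ := doubledLevel_ssubset (hGF (by simp)) (hGF (by simp)) hAB
      exact ⟨A, hA, rfl⟩
    · rintro ⟨A, hA, rfl⟩
      refine ⟨?_, A, insert t A, ssubset_insert (notMem_of_mem_powersetCard_compl hA), rfl⟩
      rw [insert_subset_iff, singleton_subset_iff]
      exact ⟨mem_union_left _ hA, mem_union_right _ (mem_image_of_mem _ hA)⟩
  have hinj : Set.InjOn (fun A => ({A, insert t A} : Finset (Finset (Fin n))))
      (powersetCard k {t}ᶜ) := by
    intro A hA A' _ h
    have hA' : A ∈ ({A', insert t A'} : Finset _) := by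
      rw [← show ({A, insert t A} : Finset _) = {A', insert t A'} from h]
      exact mem_insert_self _ _
    rcases mem_insert.1 hA' with h | h
    · exact h
    · rw [mem_singleton] at h
      exact absurd (h ▸ mem_insert_self t A') (notMem_of_mem_powersetCard_compl hA)
  rw [copyCount, himage, card_image_of_injOn hinj, card_powersetCard, card_compl, card_singleton,
    Fintype.card_fin]

end LowerBound

theorem statement1 (n : ℕ) (hn : 1 ≤ n) :
    La2 n (VeePoset 2) (WedgePoset 2) (PChain 2) = (n - 1).choose ((n - 1) / 2) := by
  refine le_antisymm (Finset.sup_le fun F hF => ?_) ?_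
  · have hF : IsComparabilityMatching F :=
      isComparabilityMatching_iff_copyCount_eq_zero.2 (mem_filter.1 hF).2
    exact hF.copyCount_chain_two_le
  · let t : Fin n := ⟨n - 1, by omega⟩
    rw [← copyCount_chain_two_doubledLevel (t := t)]
    exact Finset.le_sup (mem_filter.2 ⟨mem_univ _,
      isComparabilityMatching_iff_copyCount_eq_zero.1 isComparabilityMatching_doubledLevel⟩)

end
end

section
/- For all integers n ≥ 1 and r ≥ 1, La(n, P_3, ∧_r) = La(n, P_3, ∨_r) = max over 0 ≤ i ≤ n of C(n,i)·C(C(i,⌊i/2⌋), r). Moreover, for each fixed r, if i_r(n) denotes any value of i attaining this maximum, then i_r(n)/n → 2^r/(2^r+1) as n → ∞. -/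
open Classical Finset

noncomputable section

/-! The copies of `∧_r` in a `P₃`-free family `F` are counted by their top set `B`: the members of
`F` strictly below `B` form an antichain in `2^B`, so by Sperner there are at most
`C(|B|, ⌊|B|/2⌋)` of them, and the sets `B` having something below them form an antichain, so the
LYM inequality bounds `∑_B C(C(|B|, ⌊|B|/2⌋), r)` by its largest level term. The two full levels
`i` and `⌊i/2⌋` attain this bound, and `∨_r` reduces to `∧_r` by complementation.

For the asymptotics, `C(C(i, ⌊i/2⌋), r)` is `2^{ri}` up to a factor polynomial in `n`, while the
ratio of consecutive terms of `C(n, i) 2^{ri}` is `2^r (n - i) / (i + 1)`, which stays a constant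
factor above `1` (below `1`) at distance `δn` below (above) `c n` with `c = 2^r / (2^r + 1)`. A
maximiser at distance `2δn` from `c n` would thus lose a factor exponential in `n`, which the
polynomial factor cannot make up. -/

theorem Finset.sup_id_eq_of_mem_of_forall_le {α : Type*} [SemilatticeSup α] [OrderBot α]
    {s : Finset α} {b : α} (hb : b ∈ s) (h : ∀ a ∈ s, a ≤ b) : s.sup id = b :=
  le_antisymm (Finset.sup_le h) (le_sup (f := id) hb)

namespace IsCopy

variable {α β : Type} [PartialOrder α] [Fintype α] [PartialOrder β] [Fintype β] {n : ℕ}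
  {G : Finset (Finset (Fin n))}

theorem card_eq (h : IsCopy α G) : G.card = Fintype.card α := by
  obtain ⟨φ, hφ, rfl, -⟩ := h
  rw [card_image_of_injective _ hφ, card_univ]

theorem of_orderIso (e : α ≃o β) (h : IsCopy α G) : IsCopy β G := by
  obtain ⟨φ, hφ, rfl, hmono⟩ := h
  refine ⟨φ ∘ e.symm, hφ.comp e.symm.injective, ?_, fun x y hxy => hmono _ _ (e.symm.monotone hxy)⟩
  rw [← image_image, image_univ_of_surjective e.symm.surjective]

theorem image_compl (h : IsCopy α G) : IsCopy αᵒᵈ (G.image compl) := by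
  obtain ⟨φ, hφ, rfl, hmono⟩ := h
  refine ⟨fun x => (φ (OrderDual.ofDual x))ᶜ,
    compl_injective.comp (hφ.comp (OrderDual.ofDual (α := α)).injective), ?_,
    fun x y hxy => compl_subset_compl.mpr (hmono _ _ hxy)⟩
  ext A
  simp only [mem_image, mem_univ, true_and, OrderDual.exists, OrderDual.ofDual_toDual]
  exact ⟨fun ⟨x, hx⟩ => ⟨_, ⟨x, rfl⟩, hx⟩, fun ⟨_, ⟨x, hx⟩, hA⟩ => ⟨x, hx ▸ hA⟩⟩

end IsCopy

theorem image_compl_image_compl {n : ℕ} (F : Finset (Finset (Fin n))) :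
    (F.image compl).image compl = F := by
  simp

section Copies

variable {α β : Type} [PartialOrder α] [Fintype α] [PartialOrder β] [Fintype β] {n : ℕ}

theorem isCopy_orderDual_image_compl_iff {G : Finset (Finset (Fin n))} :
    IsCopy αᵒᵈ (G.image compl) ↔ IsCopy α G := by
  refine ⟨fun h => ?_, IsCopy.image_compl⟩
  simpa only [image_compl_image_compl] using h.image_compl.of_orderIso (OrderIso.dualDual α).symm

theorem copyCount_congr (h : ∀ G : Finset (Finset (Fin n)), IsCopy α G ↔ IsCopy β G)
    (F : Finset (Finset (Fin n))) : copyCount α F = copyCount β F := by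
  simp only [copyCount, h]

theorem copyCount_orderDual_image_compl (F : Finset (Finset (Fin n))) :
    copyCount αᵒᵈ (F.image compl) = copyCount α F := by
  refine card_nbij' (image compl) (image compl) (fun G hG => ?_) (fun G hG => ?_)
    (fun G _ => image_compl_image_compl G) (fun G _ => image_compl_image_compl G)
  · simp only [coe_filter, mem_powerset, Set.mem_ofPred_eq] at hG ⊢
    refine ⟨image_compl_image_compl F ▸ image_subset_image hG.1, ?_⟩
    exact isCopy_orderDual_image_compl_iff.mp (by rw [image_compl_image_compl]; exact hG.2)
  · simp only [coe_filter, mem_powerset, Set.mem_ofPred_eq] at hG ⊢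
    exact ⟨image_subset_image hG.1, hG.2.image_compl⟩

theorem isCopy_iff_of_top (t : α) (hle : ∀ x, x ≤ t) (heq : ∀ x y : α, x ≤ y → x = y ∨ y = t)
    {G : Finset (Finset (Fin n))} :
    IsCopy α G ↔ G.card = Fintype.card α ∧ ∃ B ∈ G, ∀ A ∈ G, A ⊆ B := by
  constructor
  · intro h
    refine ⟨h.card_eq, ?_⟩
    obtain ⟨φ, -, rfl, hmono⟩ := h
    exact ⟨φ t, mem_image_of_mem _ (mem_univ _), by simpa using fun x => hmono x t (hle x)⟩
  · rintro ⟨hcard, B, hB, hsub⟩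
    let e₀ : α ≃ G := Fintype.equivOfCardEq (by rw [Fintype.card_coe, hcard])
    let e := e₀.trans (Equiv.swap (e₀ t) ⟨B, hB⟩)
    have het : e t = ⟨B, hB⟩ := Equiv.swap_apply_left _ _
    refine ⟨fun x => e x, Subtype.val_injective.comp e.injective, ?_, fun x y hxy => ?_⟩
    · ext A
      simp only [mem_image, mem_univ, true_and]
      exact ⟨by rintro ⟨x, rfl⟩; exact (e x).2, fun hA => ⟨e.symm ⟨A, hA⟩, by simp⟩⟩
    · rcases heq x y hxy with rfl | rfl
      · exact subset_rfl
      · simpa only [het] using hsub _ (e x).2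

end Copies

section Chain

variable {n : ℕ}

theorem isCopy_chain_three {A B C : Finset (Fin n)} (hAB : A ⊂ B) (hBC : B ⊂ C) :
    IsCopy (PChain 3) {A, B, C} := by
  have hmono : StrictMono ![A, B, C] :=
    Fin.strictMono_iff_lt_succ.mpr fun i => by fin_cases i <;> assumption
  exact ⟨![A, B, C], hmono.injective, by ext; simp [Fin.exists_fin_succ, eq_comm],
    fun _ _ => hmono.monotone.imp⟩

theorem copyCount_chain_three_eq_zero_iff {F : Finset (Finset (Fin n))} :
    copyCount (PChain 3) F = 0 ↔ ∀ A ∈ F, ∀ B ∈ F, ∀ C ∈ F, A ⊂ B → ¬ B ⊂ C := by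
  simp only [copyCount, card_eq_zero, filter_eq_empty_iff, mem_powerset]
  constructor
  · intro h A hA B hB C hC hAB hBC
    refine h ?_ (isCopy_chain_three hAB hBC)
    simp [insert_subset_iff, hA, hB, hC]
  · rintro h G hGF ⟨φ, hφ, rfl, hmono⟩
    have hφ' : StrictMono φ := Monotone.strictMono_of_injective (fun x y => hmono x y) hφ
    have mem : ∀ i, φ i ∈ F := fun i => hGF (mem_image_of_mem _ (mem_univ _))
    exact h _ (mem 0) _ (mem 1) _ (mem 2) (hφ' (by decide)) (hφ' (by decide))

theorem copyCount_chain_three_image_compl (F : Finset (Finset (Fin n))) :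
    copyCount (PChain 3) (F.image compl) = copyCount (PChain 3) F := by
  rw [← copyCount_orderDual_image_compl (α := PChain 3) F]
  exact copyCount_congr (fun _ => ⟨IsCopy.of_orderIso Fin.revOrderIso.symm,
    IsCopy.of_orderIso Fin.revOrderIso⟩) _

end Chain

namespace WedgePoset

variable {r : ℕ}

def top : WedgePoset r := ⟨1, ⟨0, by simp⟩⟩

theorem eq_top_of_fst_eq_one {x : WedgePoset r} (hx : x.1 = 1) : x = top := by
  obtain ⟨i, k⟩ := x
  subst hx
  exact congrArg _ (Fin.ext (Nat.lt_one_iff.mp k.isLt))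

theorem le_top (x : WedgePoset r) : x ≤ top := by
  by_cases hx : x.1 = 1
  · exact Or.inl (eq_top_of_fst_eq_one hx)
  · exact Or.inr ((by decide : ∀ a : Fin 2, a ≠ 1 → a < 1) _ hx)

theorem eq_or_eq_top {x y : WedgePoset r} (h : x ≤ y) : x = y ∨ y = top :=
  h.imp_right fun hlt => eq_top_of_fst_eq_one ((by decide : ∀ a b : Fin 2, a < b → b = 1) _ _ hlt)

theorem card_eq : Fintype.card (WedgePoset r) = r + 1 := by
  simp [KP]

end WedgePoset

namespace VeePoset

variable {r : ℕ}

def bot : VeePoset r := ⟨0, ⟨0, by simp⟩⟩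

theorem eq_bot_of_fst_eq_zero {x : VeePoset r} (hx : x.1 = 0) : x = bot := by
  obtain ⟨i, k⟩ := x
  subst hx
  exact congrArg _ (Fin.ext (Nat.lt_one_iff.mp k.isLt))

theorem bot_le (x : VeePoset r) : bot ≤ x := by
  by_cases hx : x.1 = 0
  · exact Or.inl (eq_bot_of_fst_eq_zero hx).symm
  · exact Or.inr ((by decide : ∀ a : Fin 2, a ≠ 0 → 0 < a) _ hx)

theorem eq_or_eq_bot {x y : VeePoset r} (h : x ≤ y) : x = y ∨ x = bot :=
  h.imp_right fun hlt => eq_bot_of_fst_eq_zero ((by decide : ∀ a b : Fin 2, a < b → a = 0) _ _ hlt)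

theorem card_eq : Fintype.card (VeePoset r) = r + 1 := by
  simp [KP, add_comm]

end VeePoset

section WedgeCopies

variable {n r : ℕ}

theorem isCopy_wedge_iff {G : Finset (Finset (Fin n))} :
    IsCopy (WedgePoset r) G ↔ G.card = r + 1 ∧ ∃ B ∈ G, ∀ A ∈ G, A ⊆ B := by
  rw [isCopy_iff_of_top WedgePoset.top WedgePoset.le_top (fun _ _ => WedgePoset.eq_or_eq_top),
    WedgePoset.card_eq]

theorem copyCount_vee_eq_copyCount_wedge_image_compl (F : Finset (Finset (Fin n))) :
    copyCount (VeePoset r) F = copyCount (WedgePoset r) (F.image compl) := by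
  rw [← copyCount_orderDual_image_compl (α := VeePoset r) F]
  refine copyCount_congr (fun G => ?_) _
  rw [isCopy_iff_of_top (OrderDual.toDual VeePoset.bot) (fun x => VeePoset.bot_le x.ofDual)
      (fun _ _ h => (VeePoset.eq_or_eq_bot h).imp Eq.symm id),
    isCopy_wedge_iff, Fintype.card_orderDual, VeePoset.card_eq]

theorem copyCount_wedge_eq_sum (F : Finset (Finset (Fin n))) :
    copyCount (WedgePoset r) F = ∑ B ∈ F, (#{A ∈ F | A ⊂ B}).choose r := by
  have hsum : ∑ B ∈ F, (#{A ∈ F | A ⊂ B}).choose r =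
      #(F.sigma fun B => {A ∈ F | A ⊂ B}.powersetCard r) := by
    simp only [card_sigma, card_powersetCard]
  rw [hsum, copyCount]
  symm
  have top_of_mem : ∀ p ∈ F.sigma fun B => {A ∈ F | A ⊂ B}.powersetCard r,
      p.1 ∉ p.2 ∧ ∀ A ∈ insert p.1 p.2, A ∈ F ∧ A ⊆ p.1 := by
    simp only [mem_sigma, mem_powersetCard]
    rintro ⟨B, S⟩ ⟨hB, hS, -⟩
    have hS' : ∀ A ∈ S, A ∈ F ∧ A ⊂ B := fun A hA => mem_filter.mp (hS hA)
    exact ⟨fun h => (hS' B h).2.ne rfl, forall_mem_insert .. |>.mpr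
      ⟨⟨hB, subset_rfl⟩, fun A hA => ⟨(hS' A hA).1, (hS' A hA).2.subset⟩⟩⟩
  refine card_nbij' (fun p => insert p.1 p.2) (fun G => ⟨G.sup id, G.erase (G.sup id)⟩)
    (fun p hp => ?_) (fun G hG => ?_) (fun p hp => ?_) (fun G hG => ?_)
  · obtain ⟨hBS, hins⟩ := top_of_mem p hp
    simp only [coe_filter, mem_powerset, Set.mem_ofPred_eq]
    refine ⟨fun A hA => (hins A hA).1, isCopy_wedge_iff.mpr ⟨?_, p.1, mem_insert_self _ _,
      fun A hA => (hins A hA).2⟩⟩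
    rw [card_insert_of_notMem hBS, (mem_powersetCard.mp (mem_sigma.mp hp).2).2]
  · simp only [coe_filter, mem_powerset, Set.mem_ofPred_eq, isCopy_wedge_iff] at hG
    obtain ⟨hGF, hcard, B, hB, hsub⟩ := hG
    dsimp only
    rw [Finset.sup_id_eq_of_mem_of_forall_le hB hsub]
    simp only [coe_sigma, Set.mem_sigma_iff, mem_coe, mem_powersetCard, subset_iff, mem_filter,
      mem_erase]
    exact ⟨hGF hB, fun A ⟨hAB, hA⟩ => ⟨hGF hA, ssubset_of_subset_of_ne (hsub A hA) hAB⟩,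
      by rw [card_erase_of_mem hB, hcard, Nat.add_sub_cancel]⟩
  · obtain ⟨hBS, hins⟩ := top_of_mem p hp
    dsimp only
    rw [Finset.sup_id_eq_of_mem_of_forall_le (mem_insert_self _ _) fun A hA => (hins A hA).2,
      erase_insert hBS]
  · simp only [coe_filter, mem_powerset, Set.mem_ofPred_eq, isCopy_wedge_iff] at hG
    obtain ⟨-, -, B, hB, hsub⟩ := hG
    dsimp only
    rw [Finset.sup_id_eq_of_mem_of_forall_le hB hsub, insert_erase hB]

end WedgeCopies

section Sperner

variable {α : Type*}

theorem IsAntichain.sperner_of_forall_subset {s : Finset α} {𝒜 : Finset (Finset α)}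
    (h𝒜 : IsAntichain (· ⊆ ·) (𝒜 : Set (Finset α))) (hs : ∀ A ∈ 𝒜, A ⊆ s) :
    #𝒜 ≤ (#s).choose (#s / 2) := by
  have hback : ∀ A ∈ 𝒜, (A.subtype (· ∈ s)).map (Function.Embedding.subtype _) = A :=
    fun A hA => subtype_map_of_mem (hs A hA)
  have hinj : Set.InjOn (fun A : Finset α => A.subtype (· ∈ s)) 𝒜 := fun A hA B hB h => by
    rw [← hback A hA, ← hback B hB]
    exact congrArg _ h
  have hanti : IsAntichain (· ⊆ ·)
      ((𝒜.image fun A : Finset α => A.subtype (· ∈ s)) : Set (Finset s)) := by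
    rintro _ hX _ hY hne hXY
    simp only [coe_image, Set.mem_image, mem_coe] at hX hY
    obtain ⟨A, hA, rfl⟩ := hX
    obtain ⟨B, hB, rfl⟩ := hY
    have hAB : A ⊆ B := by
      rw [← hback A hA, ← hback B hB]
      exact map_subset_map.mpr hXY
    exact hne (congrArg _ (h𝒜.eq hA hB hAB))
  calc #𝒜 = #(𝒜.image fun A : Finset α => A.subtype (· ∈ s)) := (card_image_of_injOn hinj).symm
    _ ≤ (Fintype.card s).choose (Fintype.card s / 2) := hanti.sperner
    _ = (#s).choose (#s / 2) := by rw [Fintype.card_coe]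

theorem IsAntichain.sum_le_sup_choose_mul [Fintype α] {𝒜 : Finset (Finset α)}
    (h𝒜 : IsAntichain (· ⊆ ·) (𝒜 : Set (Finset α))) (w : ℕ → ℕ) :
    ∑ A ∈ 𝒜, w #A ≤
      (range (Fintype.card α + 1)).sup fun i => (Fintype.card α).choose i * w i := by
  set N := Fintype.card α
  set M := (range (N + 1)).sup fun i => N.choose i * w i
  have hterm : ∀ A ∈ 𝒜, (w #A : ℚ) ≤ M * ((N.choose #A : ℚ))⁻¹ := fun A _ => by
    have hpos : (0 : ℚ) < N.choose #A := mod_cast Nat.choose_pos A.card_le_univ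
    rw [le_mul_inv_iff₀ hpos, mul_comm]
    exact_mod_cast le_sup (f := fun i => N.choose i * w i) (mem_range_succ_iff.mpr A.card_le_univ)
  have key : ((∑ A ∈ 𝒜, w #A : ℕ) : ℚ) ≤ M := calc
    _ = ∑ A ∈ 𝒜, (w #A : ℚ) := by push_cast; rfl
    _ ≤ ∑ A ∈ 𝒜, M * ((N.choose #A : ℚ))⁻¹ := sum_le_sum hterm
    _ = M * ∑ A ∈ 𝒜, ((N.choose #A : ℚ))⁻¹ := (mul_sum ..).symm
    _ ≤ M * 1 := by gcongr; exact lubell_yamamoto_meshalkin_inequality_sum_inv_choose h𝒜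
    _ = M := mul_one _
  exact_mod_cast key

end Sperner

section UpperBound

variable {n r : ℕ} {F : Finset (Finset (Fin n))}

theorem isAntichain_filter_ssubset (hF : copyCount (PChain 3) F = 0) {B : Finset (Fin n)}
    (hB : B ∈ F) : IsAntichain (· ⊆ ·) (({A ∈ F | A ⊂ B} : Finset _) : Set (Finset (Fin n))) := by
  intro X hX Y hY hne hXY
  simp only [coe_filter, Set.mem_ofPred_eq] at hX hY
  exact copyCount_chain_three_eq_zero_iff.mp hF X hX.1 Y hY.1 B hB
    (ssubset_of_subset_of_ne hXY hne) hY.2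

theorem isAntichain_filter_exists_ssubset (hF : copyCount (PChain 3) F = 0) :
    IsAntichain (· ⊆ ·) (({B ∈ F | ∃ A ∈ F, A ⊂ B} : Finset _) : Set (Finset (Fin n))) := by
  intro X hX Y hY hne hXY
  simp only [coe_filter, Set.mem_ofPred_eq] at hX hY
  obtain ⟨hXF, A, hA, hAX⟩ := hX
  exact copyCount_chain_three_eq_zero_iff.mp hF A hA X hXF Y hY.1 hAX
    (ssubset_of_subset_of_ne hXY hne)

theorem copyCount_wedge_le (hr : 1 ≤ r) (hF : copyCount (PChain 3) F = 0) :
    copyCount (WedgePoset r) F ≤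
      (range (n + 1)).sup fun i => n.choose i * (i.choose (i / 2)).choose r := by
  set T := {B ∈ F | ∃ A ∈ F, A ⊂ B}
  have hvanish : ∀ B ∈ F, B ∉ T → (#{A ∈ F | A ⊂ B}).choose r = 0 := fun B hB hBT => by
    have hempty : {A ∈ F | A ⊂ B} = ∅ :=
      filter_eq_empty_iff.mpr fun A hA hAB => hBT (mem_filter.mpr ⟨hB, A, hA, hAB⟩)
    rw [hempty, card_empty, Nat.choose_eq_zero_of_lt hr]
  calc copyCount (WedgePoset r) F = ∑ B ∈ F, (#{A ∈ F | A ⊂ B}).choose r :=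
        copyCount_wedge_eq_sum F
    _ = ∑ B ∈ T, (#{A ∈ F | A ⊂ B}).choose r := (sum_subset (filter_subset _ _) hvanish).symm
    _ ≤ ∑ B ∈ T, ((#B).choose (#B / 2)).choose r := sum_le_sum fun B hB =>
        Nat.choose_le_choose _ <| (isAntichain_filter_ssubset hF (mem_filter.mp hB).1)
          |>.sperner_of_forall_subset fun A hA => (mem_filter.mp hA).2.subset
    _ ≤ _ := by
        simpa using (isAntichain_filter_exists_ssubset hF).sum_le_sup_choose_mul
          fun i => (i.choose (i / 2)).choose r

end UpperBound

section LowerBound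

variable {n r i j : ℕ}

theorem mem_level {A : Finset (Fin n)} {k : ℕ} : A ∈ level n k ↔ #A = k := by
  simp [level]

theorem card_level (k : ℕ) : #(level n k) = n.choose k := by
  simp [level]

theorem copyCount_chain_three_level_union (hji : j < i) :
    copyCount (PChain 3) (level n i ∪ level n j) = 0 := by
  refine copyCount_chain_three_eq_zero_iff.mpr fun A hA B hB C hC hAB hBC => ?_
  simp only [mem_union, mem_level] at hA hB hC
  have := card_lt_card hAB
  have := card_lt_card hBC
  omega

theorem filter_ssubset_level_union {B : Finset (Fin n)} (hB : #B = i) (hji : j < i) :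
    {A ∈ level n i ∪ level n j | A ⊂ B} = B.powersetCard j := by
  ext A
  simp only [mem_filter, mem_union, mem_level, mem_powersetCard]
  constructor
  · rintro ⟨hA, hAB⟩
    have := card_lt_card hAB
    exact ⟨hAB.subset, by omega⟩
  · rintro ⟨hAB, hA⟩
    exact ⟨Or.inr hA, ssubset_of_subset_of_ne hAB (by rintro rfl; omega)⟩

theorem choose_mul_le_copyCount_wedge_level_union (hji : j < i) :
    n.choose i * (i.choose j).choose r ≤ copyCount (WedgePoset r) (level n i ∪ level n j) := by
  rw [copyCount_wedge_eq_sum]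
  calc n.choose i * (i.choose j).choose r
      = ∑ B ∈ level n i, (#{A ∈ level n i ∪ level n j | A ⊂ B}).choose r := by
        rw [sum_congr rfl fun B hB => by
          rw [filter_ssubset_level_union (mem_level.mp hB) hji, card_powersetCard, mem_level.mp hB],
          sum_const, smul_eq_mul, card_level]
    _ ≤ _ := sum_le_sum_of_subset subset_union_left

end LowerBound

section La

variable {P Q : Type} [PartialOrder P] [Fintype P] [PartialOrder Q] [Fintype Q] {n : ℕ}

theorem copyCount_le_la {F : Finset (Finset (Fin n))} (hF : copyCount P F = 0) :
    copyCount Q F ≤ La n P Q :=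
  le_sup (f := copyCount Q) (mem_filter.mpr ⟨mem_univ _, hF⟩)

theorem la_le {M : ℕ} (h : ∀ F : Finset (Finset (Fin n)), copyCount P F = 0 → copyCount Q F ≤ M) :
    La n P Q ≤ M :=
  Finset.sup_le fun F hF => h F (mem_filter.mp hF).2

end La

section ChainThree

variable {n r : ℕ}

theorem sup_choose_le_of_forall_pos (hn : 1 ≤ n) {L : ℕ}
    (h : ∀ i, 1 ≤ i → n.choose i * (i.choose (i / 2)).choose r ≤ L) :
    (range (n + 1)).sup (fun i => n.choose i * (i.choose (i / 2)).choose r) ≤ L := by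
  refine Finset.sup_le fun i _ => ?_
  rcases Nat.eq_zero_or_pos i with rfl | hi
  · calc n.choose 0 * (Nat.choose 0 0).choose r = (1 : ℕ).choose r := by simp
      _ ≤ n * (1 : ℕ).choose r := Nat.le_mul_of_pos_left _ hn
      _ = n.choose 1 * (Nat.choose 1 (1 / 2)).choose r := by simp
      _ ≤ L := h 1 le_rfl
  · exact h i hi

theorem la_chain_three_wedge (hr : 1 ≤ r) (hn : 1 ≤ n) :
    La n (PChain 3) (WedgePoset r) =
      (range (n + 1)).sup (fun i => n.choose i * (i.choose (i / 2)).choose r) := by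
  refine le_antisymm (la_le fun _ => copyCount_wedge_le hr) (sup_choose_le_of_forall_pos hn ?_)
  intro i hi
  have hlt : i / 2 < i := Nat.div_lt_self hi one_lt_two
  exact (choose_mul_le_copyCount_wedge_level_union hlt).trans
    (copyCount_le_la (copyCount_chain_three_level_union hlt))

theorem la_chain_three_vee (hr : 1 ≤ r) (hn : 1 ≤ n) :
    La n (PChain 3) (VeePoset r) =
      (range (n + 1)).sup (fun i => n.choose i * (i.choose (i / 2)).choose r) := by
  refine le_antisymm (la_le fun F hF => ?_) (sup_choose_le_of_forall_pos hn fun i hi => ?_)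
  · rw [copyCount_vee_eq_copyCount_wedge_image_compl]
    exact copyCount_wedge_le hr (by rwa [copyCount_chain_three_image_compl])
  · have hlt : i / 2 < i := Nat.div_lt_self hi one_lt_two
    calc n.choose i * (i.choose (i / 2)).choose r
        ≤ copyCount (WedgePoset r) (level n i ∪ level n (i / 2)) :=
          choose_mul_le_copyCount_wedge_level_union hlt
      _ = copyCount (VeePoset r) ((level n i ∪ level n (i / 2)).image compl) := by
          rw [copyCount_vee_eq_copyCount_wedge_image_compl, image_compl_image_compl]
      _ ≤ La n (PChain 3) (VeePoset r) := copyCount_le_la <| by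
          rw [copyCount_chain_three_image_compl]
          exact copyCount_chain_three_level_union hlt

end ChainThree

section CentralBinomial

open Nat

theorem two_pow_le_succ_mul_choose_half (i : ℕ) : 2 ^ i ≤ (i + 1) * i.choose (i / 2) := by
  calc 2 ^ i = ∑ j ∈ range (i + 1), i.choose j := (sum_range_choose i).symm
    _ ≤ #(range (i + 1)) • i.choose (i / 2) :=
        sum_le_card_nsmul _ _ _ fun j _ => choose_le_middle j i
    _ = (i + 1) * i.choose (i / 2) := by rw [card_range, smul_eq_mul]

theorem choose_choose_half_le (r i : ℕ) : (i.choose (i / 2)).choose r ≤ (2 ^ r) ^ i :=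
  calc (i.choose (i / 2)).choose r ≤ (i.choose (i / 2)) ^ r := choose_le_pow _ _
    _ ≤ (2 ^ i) ^ r := Nat.pow_le_pow_left (choose_le_two_pow _ _) r
    _ = (2 ^ r) ^ i := by rw [← pow_mul, ← pow_mul, mul_comm]

theorem pow_le_mul_choose_choose_half {r i : ℕ} (hi : 2 * r ≤ i) :
    (2 ^ r) ^ i ≤ (2 * (i + 1)) ^ r * r ! * (i.choose (i / 2)).choose r := by
  set N := i.choose (i / 2)
  have hiN : i ≤ N := by simpa using choose_le_middle 1 i
  have hdesc : (N + 1 - r) ^ r ≤ r ! * N.choose r := by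
    rw [← descFactorial_eq_factorial_mul_choose]
    exact pow_sub_le_descFactorial N r
  calc (2 ^ r) ^ i = (2 ^ i) ^ r := by rw [← pow_mul, ← pow_mul, mul_comm]
    _ ≤ ((i + 1) * N) ^ r := Nat.pow_le_pow_left (two_pow_le_succ_mul_choose_half i) r
    _ ≤ ((i + 1) * (2 * (N + 1 - r))) ^ r := by gcongr; omega
    _ = (2 * (i + 1)) ^ r * (N + 1 - r) ^ r := by rw [← mul_pow]; ring_nf
    _ ≤ (2 * (i + 1)) ^ r * (r ! * N.choose r) := by gcongr
    _ = (2 * (i + 1)) ^ r * r ! * N.choose r := by ring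

end CentralBinomial

section BinomialWeights

variable {a ρ : ℝ} {n : ℕ}

theorem choose_succ_mul_pow_mul (a : ℝ) (n k : ℕ) :
    (n.choose (k + 1) * a ^ (k + 1) : ℝ) * (k + 1) = a * (n - k) * (n.choose k * a ^ k) := by
  rcases le_or_gt k n with hk | hk
  · have h := congrArg (Nat.cast (R := ℝ)) (Nat.choose_succ_right_eq n k)
    push_cast [Nat.cast_sub hk] at h
    linear_combination a ^ (k + 1) * h
  · simp [Nat.choose_eq_zero_of_lt hk, Nat.choose_eq_zero_of_lt (hk.trans (Nat.lt_succ_self k))]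

theorem mul_choose_mul_pow_le_succ (ha : 0 ≤ a) {k : ℕ} (h : ρ * (k + 1) ≤ a * (n - k)) :
    ρ * (n.choose k * a ^ k) ≤ n.choose (k + 1) * a ^ (k + 1) := by
  refine le_of_mul_le_mul_right ?_ (by positivity : (0 : ℝ) < k + 1)
  rw [choose_succ_mul_pow_mul]
  calc ρ * (n.choose k * a ^ k) * (k + 1) = ρ * (k + 1) * (n.choose k * a ^ k) := by ring
    _ ≤ a * (n - k) * (n.choose k * a ^ k) := by gcongr

theorem mul_choose_succ_mul_pow_le (ha : 0 ≤ a) {k : ℕ} (h : a * (n - k) * ρ ≤ k + 1) :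
    ρ * (n.choose (k + 1) * a ^ (k + 1)) ≤ n.choose k * a ^ k := by
  refine le_of_mul_le_mul_right ?_ (by positivity : (0 : ℝ) < k + 1)
  calc ρ * (n.choose (k + 1) * a ^ (k + 1)) * (k + 1)
      = a * (n - k) * ρ * (n.choose k * a ^ k) := by rw [mul_assoc, choose_succ_mul_pow_mul]; ring
    _ ≤ (k + 1) * (n.choose k * a ^ k) := by gcongr
    _ = n.choose k * a ^ k * (k + 1) := mul_comm _ _

theorem pow_mul_choose_mul_pow_le_of_growth (ha : 0 ≤ a) (hρ : 0 ≤ ρ) {m d : ℕ}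
    (h : ∀ k, m ≤ k → k < m + d → ρ * (k + 1) ≤ a * (n - k)) :
    ρ ^ d * (n.choose m * a ^ m) ≤ n.choose (m + d) * a ^ (m + d) :=
  geom_le (u := fun j => n.choose (m + j) * a ^ (m + j)) hρ d fun j hj =>
    mul_choose_mul_pow_le_succ ha (by exact_mod_cast h (m + j) (by omega) (by omega))

theorem pow_mul_choose_mul_pow_le_of_decay (ha : 0 ≤ a) (hρ : 0 < ρ) {m d : ℕ}
    (h : ∀ k, m ≤ k → k < m + d → a * (n - k) * ρ ≤ k + 1) :
    ρ ^ d * (n.choose (m + d) * a ^ (m + d)) ≤ n.choose m * a ^ m := by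
  have hgeom := le_geom (u := fun j => n.choose (m + j) * a ^ (m + j)) (inv_nonneg.mpr hρ.le) d
    fun j hj => (le_inv_mul_iff₀ hρ).mpr <|
      mul_choose_succ_mul_pow_le ha (by exact_mod_cast h (m + j) (by omega) (by omega))
  rwa [inv_pow, le_inv_mul_iff₀ (pow_pos hρ d)] at hgeom

end BinomialWeights

section Window

variable {a c δ : ℝ} {n k : ℕ}

theorem div_mul_succ_le_mul_sub_of_succ_le (ha : 1 ≤ a) (hc : a * (1 - c) = c) (hδ : 0 < δ)
    (hδc : δ < c) (hk : (k : ℝ) + 1 ≤ (c - δ) * n) : (c + δ) / (c - δ) * (k + 1) ≤ a * (n - k) := by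
  have hβ : 0 < c - δ := by linarith
  have hn : (0 : ℝ) ≤ n := Nat.cast_nonneg n
  have hgap : (c + δ) * n ≤ a * (n - k) := by
    nlinarith [mul_le_mul_of_nonneg_left (show (k : ℝ) ≤ (c - δ) * n by linarith)
      (by linarith : (0 : ℝ) ≤ a), mul_nonneg (mul_nonneg hn hδ.le) (by linarith : (0 : ℝ) ≤ a - 1)]
  rw [div_mul_eq_mul_div, div_le_iff₀ hβ]
  calc (c + δ) * (k + 1) ≤ (c + δ) * ((c - δ) * n) := by gcongr; linarith
    _ = (c - δ) * ((c + δ) * n) := by ring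
    _ ≤ (c - δ) * (a * (n - k)) := by gcongr
    _ = a * (n - k) * (c - δ) := by ring

theorem mul_sub_mul_div_le_succ_of_le (ha : 1 ≤ a) (hc : a * (1 - c) = c) (hδ : 0 < δ)
    (hδc : δ < c) (hk : (c + δ) * n ≤ k) : a * (n - k) * ((c + δ) / (c - δ)) ≤ k + 1 := by
  have hβ : 0 < c - δ := by linarith
  have hn : (0 : ℝ) ≤ n := Nat.cast_nonneg n
  have hgap : a * (n - k) ≤ (c - δ) * n := by
    nlinarith [mul_le_mul_of_nonneg_left hk (by linarith : (0 : ℝ) ≤ a),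
      mul_nonneg (mul_nonneg hn hδ.le) (by linarith : (0 : ℝ) ≤ a - 1)]
  rw [mul_div_assoc', div_le_iff₀ hβ]
  calc a * (n - k) * (c + δ) ≤ (c - δ) * n * (c + δ) := by gcongr; linarith
    _ = (c - δ) * ((c + δ) * n) := by ring
    _ ≤ (c - δ) * (k + 1) := by gcongr; linarith
    _ = (k + 1) * (c - δ) := by ring

end Window

open Filter Asymptotics in
theorem eventually_mul_add_one_pow_lt_pow {ρ δ : ℝ} (hρ : 1 < ρ) (hδ : 0 < δ) (C : ℝ) (r : ℕ) :
    ∀ᶠ n : ℕ in atTop, ∀ d : ℕ, δ * n ≤ d + 1 → C * (n + 1) ^ r < ρ ^ d := by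
  set q := ρ ^ δ
  have hq : 1 < q := Real.one_lt_rpow hρ hδ
  have hlittle : (fun n : ℕ => C * ρ * ((n + 1 : ℕ) : ℝ) ^ r) =o[atTop] fun n => q ^ (n + 1) :=
    ((isLittleO_pow_const_const_pow_of_one_lt r hq).comp_tendsto
      (tendsto_add_atTop_nat 1)).const_mul_left _
  filter_upwards [hlittle.def (by positivity : (0 : ℝ) < (2 * q)⁻¹)] with n hn d hd
  have hqn : 0 < q ^ n := pow_pos (by linarith) n
  have hpow : q ^ n ≤ ρ * ρ ^ d := by
    calc q ^ n = ρ ^ (δ * n) := by rw [Real.rpow_mul (by linarith), Real.rpow_natCast]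
      _ ≤ ρ ^ ((d + 1 : ℕ) : ℝ) := Real.rpow_le_rpow_of_exponent_le hρ.le (by push_cast; exact hd)
      _ = ρ * ρ ^ d := by rw [Real.rpow_natCast, pow_succ, mul_comm]
  have hle : C * ρ * (n + 1) ^ r ≤ q ^ n / 2 := by
    have := (le_abs_self _).trans hn
    rw [Real.norm_eq_abs, abs_of_pos (pow_pos (by linarith) _), pow_succ] at this
    push_cast at this
    calc C * ρ * (n + 1) ^ r ≤ (2 * q)⁻¹ * (q ^ n * q) := this
      _ = q ^ n / 2 := by field_simp
  have : C * (n + 1) ^ r * ρ < ρ ^ d * ρ := by nlinarith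
  exact lt_of_mul_lt_mul_right this (by linarith)

section Maximizer

open Nat

variable {r n m : ℕ}

theorem choose_mul_two_pow_pow_le_of_forall_le
    (hm : ∀ i ≤ n, n.choose i * (i.choose (i / 2)).choose r ≤
      n.choose m * (m.choose (m / 2)).choose r) {i : ℕ} (hi : 2 * r ≤ i) (hin : i ≤ n) :
    n.choose i * ((2 : ℝ) ^ r) ^ i ≤
      (((2 * (n + 1)) ^ r * r ! : ℕ) : ℝ) * (n.choose m * ((2 : ℝ) ^ r) ^ m) := by
  have key : n.choose i * (2 ^ r) ^ i ≤ (2 * (n + 1)) ^ r * r ! * (n.choose m * (2 ^ r) ^ m) :=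
    calc n.choose i * (2 ^ r) ^ i
        ≤ n.choose i * ((2 * (i + 1)) ^ r * r ! * (i.choose (i / 2)).choose r) := by
          gcongr; exact pow_le_mul_choose_choose_half hi
      _ ≤ (2 * (n + 1)) ^ r * r ! * (n.choose i * (i.choose (i / 2)).choose r) := by
          rw [mul_left_comm]; gcongr
      _ ≤ (2 * (n + 1)) ^ r * r ! * (n.choose m * (m.choose (m / 2)).choose r) :=
          Nat.mul_le_mul_left _ (hm i hin)
      _ ≤ (2 * (n + 1)) ^ r * r ! * (n.choose m * (2 ^ r) ^ m) := by
          gcongr; exact choose_choose_half_le r m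
  exact_mod_cast key

variable {c δ : ℝ}

theorem sub_two_mul_lt_of_forall_le (hc : (2 : ℝ) ^ r * (1 - c) = c) (hδ : 0 < δ)
    (hδc : 2 * δ < c) (hmn : m ≤ n)
    (hm : ∀ i ≤ n, n.choose i * (i.choose (i / 2)).choose r ≤
      n.choose m * (m.choose (m / 2)).choose r)
    (hbig : 2 * r + 1 ≤ (c - δ) * n)
    (hK : ∀ d : ℕ, δ * n ≤ d + 1 →
      (((2 * (n + 1)) ^ r * r ! : ℕ) : ℝ) < ((c + δ) / (c - δ)) ^ d) :
    (c - 2 * δ) * n < m := by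
  by_contra! hcon
  have ha : (1 : ℝ) ≤ 2 ^ r := one_le_pow₀ one_le_two
  have hc1 : c < 1 := by nlinarith
  have hδn : 0 ≤ δ * n := mul_nonneg hδ.le (Nat.cast_nonneg n)
  set m' := ⌊(c - δ) * n⌋₊
  have hm'le : (m' : ℝ) ≤ (c - δ) * n := Nat.floor_le (by linarith)
  have hm'gt : (c - δ) * n < m' + 1 := Nat.lt_floor_add_one _
  have hm'n : m' ≤ n := by
    have : (c - δ) * n ≤ n := by nlinarith [(Nat.cast_nonneg n : (0 : ℝ) ≤ n)]
    exact_mod_cast hm'le.trans this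
  have h2r : 2 * r ≤ m' := by
    have : (2 * r : ℝ) < m' := by linarith
    exact_mod_cast this.le
  obtain ⟨d, hd⟩ : ∃ d, m' = m + d := Nat.exists_eq_add_of_le (Nat.le_floor (by linarith))
  have hgrowth := pow_mul_choose_mul_pow_le_of_growth (n := n) (m := m) (d := d)
    (by linarith : (0 : ℝ) ≤ 2 ^ r) (div_nonneg (by linarith) (by linarith))
    fun k _ hk => div_mul_succ_le_mul_sub_of_succ_le ha hc hδ (by linarith) <| by
      have : (k + 1 : ℝ) ≤ m' := by rw [hd]; exact_mod_cast hk
      linarith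
  have hsand := choose_mul_two_pow_pow_le_of_forall_le hm h2r hm'n
  rw [hd] at hsand
  have hgpos : (0 : ℝ) < n.choose m * ((2 : ℝ) ^ r) ^ m := by
    have := Nat.choose_pos hmn
    positivity
  have hρK := le_of_mul_le_mul_right (hgrowth.trans hsand) hgpos
  have hdn : δ * n ≤ d + 1 := by
    have : (m' : ℝ) = m + d := by exact_mod_cast hd
    linarith
  exact (hK d hdn).not_ge hρK

theorem lt_add_two_mul_of_forall_le (hc : (2 : ℝ) ^ r * (1 - c) = c) (hδ : 0 < δ)
    (hδc : 2 * δ < c) (hmn : m ≤ n)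
    (hm : ∀ i ≤ n, n.choose i * (i.choose (i / 2)).choose r ≤
      n.choose m * (m.choose (m / 2)).choose r)
    (hbig : 2 * r ≤ (c + δ) * n)
    (hK : ∀ d : ℕ, δ * n ≤ d + 1 →
      (((2 * (n + 1)) ^ r * r ! : ℕ) : ℝ) < ((c + δ) / (c - δ)) ^ d) :
    (m : ℝ) < (c + 2 * δ) * n := by
  by_contra! hcon
  have ha : (1 : ℝ) ≤ 2 ^ r := one_le_pow₀ one_le_two
  have hδn : 0 ≤ δ * n := mul_nonneg hδ.le (Nat.cast_nonneg n)
  set m' := ⌈(c + δ) * n⌉₊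
  have hm'ge : (c + δ) * n ≤ m' := Nat.le_ceil _
  have hm'lt : (m' : ℝ) < (c + δ) * n + 1 := Nat.ceil_lt_add_one (by nlinarith)
  have h2r : 2 * r ≤ m' := by exact_mod_cast hbig.trans hm'ge
  obtain ⟨d, hd⟩ : ∃ d, m = m' + d := Nat.exists_eq_add_of_le (Nat.ceil_le.mpr (by linarith))
  have hdecay := pow_mul_choose_mul_pow_le_of_decay (n := n) (m := m') (d := d)
    (by linarith : (0 : ℝ) ≤ 2 ^ r) (div_pos (by linarith) (by linarith))
    fun k hk _ => mul_sub_mul_div_le_succ_of_le ha hc hδ (by linarith) <| by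
      have : (m' : ℝ) ≤ k := by exact_mod_cast hk
      linarith
  have hsand := choose_mul_two_pow_pow_le_of_forall_le hm h2r (by omega)
  rw [← hd] at hdecay
  have hgpos : (0 : ℝ) < n.choose m * ((2 : ℝ) ^ r) ^ m := by
    have := Nat.choose_pos hmn
    positivity
  have hρK := le_of_mul_le_mul_right (hdecay.trans hsand) hgpos
  have hdn : δ * n ≤ d + 1 := by
    have : (m : ℝ) = m' + d := by exact_mod_cast hd
    linarith
  exact (hK d hdn).not_ge hρK

end Maximizer

open Filter in
theorem eventually_sub_two_mul_lt_and_lt_add_two_mul {r : ℕ} {c δ : ℝ}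
    (hc : (2 : ℝ) ^ r * (1 - c) = c) (hδ : 0 < δ) (hδc : 2 * δ < c) (ir : ℕ → ℕ)
    (hmax : ∀ᶠ n in atTop, ir n ≤ n ∧ ∀ i ≤ n, n.choose i * (i.choose (i / 2)).choose r ≤
      n.choose (ir n) * ((ir n).choose (ir n / 2)).choose r) :
    ∀ᶠ n : ℕ in atTop, (c - 2 * δ) * n < ir n ∧ (ir n : ℝ) < (c + 2 * δ) * n := by
  have hρ : 1 < (c + δ) / (c - δ) := (one_lt_div (by linarith)).mpr (by linarith)
  have hbig : ∀ᶠ n : ℕ in atTop, 2 * (r : ℝ) + 1 ≤ (c - δ) * n :=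
    (tendsto_natCast_atTop_atTop.const_mul_atTop (by linarith)).eventually_ge_atTop _
  filter_upwards [hmax, hbig, eventually_mul_add_one_pow_lt_pow hρ hδ (2 ^ r * r.factorial) r]
    with n ⟨hmn, hm⟩ hbig hpoly
  have hK : ∀ d : ℕ, δ * n ≤ d + 1 →
      (((2 * (n + 1)) ^ r * r.factorial : ℕ) : ℝ) < ((c + δ) / (c - δ)) ^ d := fun d hd => by
    push_cast
    linarith [hpoly d hd, show ((2 : ℝ) * (n + 1)) ^ r * r.factorial =
      2 ^ r * r.factorial * (n + 1) ^ r by rw [mul_pow]; ring]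
  have hδn : 0 ≤ δ * n := mul_nonneg hδ.le (Nat.cast_nonneg n)
  exact ⟨sub_two_mul_lt_of_forall_le hc hδ hδc hmn hm hbig hK,
    lt_add_two_mul_of_forall_le hc hδ hδc hmn hm (by linarith) hK⟩

open Filter Topology in
theorem tendsto_div_of_eventually_forall_le {r : ℕ} (ir : ℕ → ℕ)
    (hmax : ∀ᶠ n in atTop, ir n ≤ n ∧ ∀ i ≤ n, n.choose i * (i.choose (i / 2)).choose r ≤
      n.choose (ir n) * ((ir n).choose (ir n / 2)).choose r) :
    Tendsto (fun n : ℕ => (ir n : ℝ) / n) atTop (𝓝 ((2 : ℝ) ^ r / ((2 : ℝ) ^ r + 1))) := by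
  set c : ℝ := 2 ^ r / (2 ^ r + 1)
  have hc : (2 : ℝ) ^ r * (1 - c) = c := by simp only [c]; field_simp; ring
  have hc0 : 0 < c := by positivity
  rw [Metric.tendsto_nhds]
  intro ε hε
  set δ := min (ε / 4) (c / 4)
  have hδ : 0 < δ := lt_min (by linarith) (by linarith)
  have hδε : δ ≤ ε / 4 := min_le_left _ _
  have hδc : 2 * δ < c := by linarith [min_le_right (ε / 4) (c / 4)]
  filter_upwards [eventually_sub_two_mul_lt_and_lt_add_two_mul hc hδ hδc ir hmax,
    eventually_gt_atTop 0] with n ⟨hlo, hhi⟩ hn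
  have hn' : (0 : ℝ) < n := by exact_mod_cast hn
  have hlo' : c - 2 * δ < ir n / n := (lt_div_iff₀ hn').mpr hlo
  have hhi' : (ir n : ℝ) / n < c + 2 * δ := (div_lt_iff₀ hn').mpr hhi
  rw [Real.dist_eq, abs_lt]
  constructor <;> linarith

theorem statement4 (r : ℕ) (hr : 1 ≤ r) :
    (∀ n : ℕ, 1 ≤ n →
      La n (PChain 3) (WedgePoset r) =
        (Finset.range (n + 1)).sup (fun i => n.choose i * (i.choose (i / 2)).choose r) ∧
      La n (PChain 3) (VeePoset r) =
        (Finset.range (n + 1)).sup (fun i => n.choose i * (i.choose (i / 2)).choose r)) ∧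
    (∀ ir : ℕ → ℕ,
      (∀ n : ℕ, 1 ≤ n → ir n ≤ n ∧
        n.choose (ir n) * ((ir n).choose (ir n / 2)).choose r =
          (Finset.range (n + 1)).sup (fun i => n.choose i * (i.choose (i / 2)).choose r)) →
      Filter.Tendsto (fun n : ℕ => (ir n : ℝ) / (n : ℝ)) Filter.atTop
        (nhds ((2 : ℝ) ^ r / ((2 : ℝ) ^ r + 1)))) := by
  refine ⟨fun n hn => ⟨la_chain_three_wedge hr hn, la_chain_three_vee hr hn⟩, fun ir H => ?_⟩
  refine tendsto_div_of_eventually_forall_le ir <| Filter.eventually_atTop.mpr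
    ⟨1, fun n hn => ⟨(H n hn).1, fun i hi => ?_⟩⟩
  rw [(H n hn).2]
  exact le_sup (f := fun i => n.choose i * (i.choose (i / 2)).choose r) (mem_range_succ_iff.mpr hi)
end
end

section
/- Let n ≥ 1, let 0 ≤ i ≤ n, and let ℱ ⊆ 2^[n] be an antichain. Then β²_i(ℱ) ≤ β²_i(binom([n], j(i))), where j(i) = i + ⌊(n−i)/3⌋ if n − i ≡ 0 or 1 (mod 3), and j(i) = i + ⌈(n−i)/3⌉ if n − i ≡ 2 (mod 3). In particular, the maximum of β²_i over all antichains in 2^[n] is attained by the full level binom([n], j(i)). -/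
open Classical Finset

noncomputable section

/-!
Double counting over the permutations of `[n]`, as in the LYM inequality. A permutation `σ`
is compatible with an ordered pair `(A, B)` with `|A ∩ B| = i` if it lists first `A ∩ B`, then
`A \ B`, then `B \ A`, then the rest. Then `A` is an initial segment of the listing and, given
`A`, so is `B` apart from a fixed gap; in an antichain no two such sets are comparable, so
every `σ` is compatible with at most one pair of members. A pair has
`i! |A \ B|! |B \ A|! |(A ∪ B)ᶜ|!` compatible permutations, at least `i!` times the minimum of
`a! b! c!` over `a + b + c = n - i`. On the level `j(i)` this minimum is attained by every pair
and every permutation is compatible with exactly one pair, so no antichain has more pairs.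
-/

open scoped Nat

/-- the minimum of `a! * b! * c!` over `a + b + c = m`, attained at the most balanced split -/
def balancedTripleFactorial (m : ℕ) : ℕ := (m / 3)! * ((m + 1) / 3)! * ((m + 2) / 3)!

theorem factorial_mul_factorial_succ_le {a b : ℕ} (h : b ≤ a) :
    a ! * (b + 1)! ≤ (a + 1)! * b ! := by
  rw [Nat.factorial_succ, Nat.factorial_succ, mul_left_comm, mul_assoc]
  gcongr

theorem balancedTripleFactorial_eq {a b c : ℕ} (hab : a ≤ b) (hbc : b ≤ c) (hca : c ≤ a + 1) :
    balancedTripleFactorial (a + b + c) = a ! * b ! * c ! := by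
  rw [balancedTripleFactorial, show (a + b + c) / 3 = a by omega,
    show (a + b + c + 1) / 3 = b by omega, show (a + b + c + 2) / 3 = c by omega]

theorem balancedTripleFactorial_le (a b c : ℕ) :
    balancedTripleFactorial (a + b + c) ≤ a ! * b ! * c ! := by
  induction hN : a * a + b * b + c * c using Nat.strong_induction_on generalizing a b c with
  | _ N ih =>
  wlog hab : a ≤ b generalizing a b c
  · have := this b a c (by rw [← hN]; ring) (by omega)
    convert this using 1 <;> ring_nf
  wlog hbc : b ≤ c generalizing a b c
  · rcases le_total a c with hac | hca
    · have := this a c b (by rw [← hN]; ring) hac (by omega)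
      convert this using 1 <;> ring_nf
    · have := this c a b (by rw [← hN]; ring) hca hab
      convert this using 1 <;> ring_nf
  rcases le_or_gt c (a + 1) with hca | hca
  · exact (balancedTripleFactorial_eq hab hbc hca).le
  -- moving one unit from the largest part to the smallest decreases `a² + b² + c²`
  obtain ⟨c, rfl⟩ : ∃ c', c = c' + 1 := ⟨c - 1, by omega⟩
  calc balancedTripleFactorial (a + b + (c + 1))
      = balancedTripleFactorial (a + 1 + b + c) := by ring_nf
    _ ≤ (a + 1)! * b ! * c ! := ih _ (by rw [← hN]; nlinarith) _ _ _ rfl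
    _ ≤ a ! * b ! * (c + 1)! := by
      have := factorial_mul_factorial_succ_le (a := c) (b := a) (by omega)
      nlinarith [Nat.factorial_pos b]

section PermCount

variable {α : Type*} [DecidableEq α]

theorem card_perm_comp_eq_s10 [Fintype α] {ι : Type*} [Fintype ι] [DecidableEq ι] (f g : α → ι)
    (h : ∀ k, #{x | f x = k} = #{x | g x = k}) :
    #{σ : Equiv.Perm α | ∀ x, g (σ x) = f x} = ∏ k, (#{x | f x = k})! := by
  have E : {σ : Equiv.Perm α // ∀ x, g (σ x) = f x}
      ≃ ∀ k, ({x // f x = k} ≃ {x // g x = k}) :=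
    { toFun := fun σ k => (σ.1 : α ≃ α).subtypeEquiv (fun x => by rw [σ.2 x])
      invFun := fun E => ⟨(Equiv.sigmaFiberEquiv f).symm.trans
          ((Equiv.sigmaCongrRight E).trans (Equiv.sigmaFiberEquiv g)),
          fun x => (E (f x) ⟨x, rfl⟩).2⟩
      left_inv := fun σ => Subtype.ext (Equiv.ext fun x => rfl)
      right_inv := fun E => funext fun k => Equiv.ext fun ⟨x, hx⟩ => by subst hx; rfl }
  rw [← Fintype.card_subtype, Fintype.card_congr E, Fintype.card_pi]
  congr! with k
  rw [Fintype.card_equiv (Fintype.equivOfCardEq (by simp only [Fintype.card_subtype, h])),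
    Fintype.card_subtype]

def vennRegion (A B : Finset α) (x : α) : Bool × Bool := (decide (x ∈ A), decide (x ∈ B))

theorem map_eq_and_map_eq_iff (σ : Equiv.Perm α) (S T A B : Finset α) :
    S.map σ.toEmbedding = A ∧ T.map σ.toEmbedding = B ↔
      ∀ x, vennRegion A B (σ x) = vennRegion S T x := by
  constructor
  · rintro ⟨rfl, rfl⟩ x
    simp [vennRegion]
  · intro h
    have hmem : ∀ y, (y ∈ A ↔ σ.symm y ∈ S) ∧ (y ∈ B ↔ σ.symm y ∈ T) := fun y => by
      simpa [vennRegion, Prod.ext_iff] using h (σ.symm y)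
    constructor <;> ext y <;> simp [Finset.mem_map_equiv, hmem]

theorem card_perm_map_eq_and_map_eq [Fintype α] {S T A B : Finset α} (hS : #S = #A)
    (hT : #T = #B) (hST : #(S ∩ T) = #(A ∩ B)) :
    #{σ : Equiv.Perm α | S.map σ.toEmbedding = A ∧ T.map σ.toEmbedding = B} =
      (#(A ∩ B))! * (#A - #(A ∩ B))! * (#B - #(A ∩ B))! *
        (Fintype.card α - (#A + #B - #(A ∩ B)))! := by
  have fibers : ∀ C D : Finset α,
      #{x | vennRegion C D x = (true, true)} = #(C ∩ D) ∧
      #{x | vennRegion C D x = (true, false)} = #C - #(C ∩ D) ∧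
      #{x | vennRegion C D x = (false, true)} = #D - #(C ∩ D) ∧
      #{x | vennRegion C D x = (false, false)} = Fintype.card α - (#C + #D - #(C ∩ D)) := by
    intro C D
    refine ⟨?_, ?_, ?_, ?_⟩
    · congr 1; ext x; simp [vennRegion]
    · rw [← Finset.inter_comm, ← Finset.card_sdiff]; congr 1; ext x; simp [vennRegion]
    · rw [← Finset.card_sdiff]; congr 1; ext x; simp [vennRegion, and_comm]
    · rw [← Finset.card_union, ← Finset.card_compl]; congr 1; ext x; simp [vennRegion]
  simp_rw [map_eq_and_map_eq_iff]
  obtain ⟨f1, f2, f3, f4⟩ := fibers S T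
  obtain ⟨g1, g2, g3, g4⟩ := fibers A B
  rw [card_perm_comp_eq_s10]
  · rw [Fintype.prod_prod_type, Fintype.prod_bool, Fintype.prod_bool, Fintype.prod_bool,
      f1, f2, f3, f4, hS, hT, hST]
    ring
  · rintro ⟨_ | _, _ | _⟩ <;> simp only [*]

theorem card_add_card_sub_card_inter_le [Fintype α] (A B : Finset α) :
    #A + #B - #(A ∩ B) ≤ Fintype.card α :=
  card_union A B ▸ card_le_univ _

end PermCount

theorem Finset.pair_eq_pair_iff {α : Type*} [DecidableEq α] {a b c d : α} :
    ({a, b} : Finset α) = {c, d} ↔ a = c ∧ b = d ∨ a = d ∧ b = c := by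
  rw [← coe_inj, coe_pair, coe_pair, Set.pair_eq_pair_iff]

theorem IsAntichain.map_eq_map_of_monotone {α β : Type*} {F : Set (Finset α)}
    (hF : IsAntichain (· ⊆ ·) F) {t : ℕ → Finset β} (ht : Monotone t) (e : β ↪ α) {k l : ℕ}
    (hk : (t k).map e ∈ F) (hl : (t l).map e ∈ F) : (t k).map e = (t l).map e := by
  rcases le_total k l with h | h
  · exact hF.eq hk hl (map_subset_map.2 (ht h))
  · exact hF.eq' hk hl (map_subset_map.2 (ht h))

def orderedPairs {α : Type*} [DecidableEq α] (i : ℕ) (F : Finset (Finset α)) :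
    Finset (Finset α × Finset α) :=
  {p ∈ F.offDiag | #(p.1 ∩ p.2) = i}

theorem mem_orderedPairs {α : Type*} [DecidableEq α] {i : ℕ} {F : Finset (Finset α)}
    {A B : Finset α} : (A, B) ∈ orderedPairs i F ↔ A ∈ F ∧ B ∈ F ∧ A ≠ B ∧ #(A ∩ B) = i := by
  simp [orderedPairs, and_assoc]

theorem isAntichain_level (n k : ℕ) : IsAntichain (· ⊆ ·) (level n k : Set (Finset (Fin n))) :=
  Set.Sized.isAntichain fun A hA => by simpa [level] using hA

theorem card_orderedPairs_eq_two_mul_betaCount (n i : ℕ) (F : Finset (Finset (Fin n))) :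
    #(orderedPairs i F) = 2 * betaCount 2 n i F := by
  rw [betaCount,
    card_eq_sum_card_fiberwise (f := fun p => ({p.1, p.2} : Finset (Finset (Fin n))))]
  · rw [mul_comm, ← smul_eq_mul, ← sum_const]
    refine sum_congr rfl fun G hG => ?_
    obtain ⟨hGF, hG2, hGi⟩ : G ⊆ F ∧ #G = 2 ∧ #(G.inf id) = i := by simpa using hG
    obtain ⟨A, B, hAB, rfl⟩ := card_eq_two.1 hG2
    have hA : A ∈ F := hGF (mem_insert_self _ _)
    have hB : B ∈ F := hGF (mem_insert_of_mem (mem_singleton_self _))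
    have hi : #(A ∩ B) = i := by simpa using hGi
    have hfiber :
        {p ∈ orderedPairs i F | {p.1, p.2} = ({A, B} : Finset _)} = {(A, B), (B, A)} := by
      ext ⟨C, D⟩
      simp only [mem_filter, mem_orderedPairs, Finset.pair_eq_pair_iff, mem_insert,
        mem_singleton, Prod.mk.injEq]
      constructor
      · exact And.right
      · rintro (⟨rfl, rfl⟩ | ⟨rfl, rfl⟩)
        · exact ⟨⟨hA, hB, hAB, hi⟩, by simp⟩
        · exact ⟨⟨hB, hA, hAB.symm, by rwa [inter_comm]⟩, by simp⟩
    rw [hfiber, card_pair (by simp [hAB])]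
  · rintro ⟨A, B⟩ hp
    obtain ⟨hA, hB, hAB, hi⟩ := mem_orderedPairs.1 hp
    simp [insert_subset_iff, hA, hB, card_pair hAB, hi]

theorem add_two_le_of_mem_orderedPairs {α : Type*} [Fintype α] [DecidableEq α] {i : ℕ}
    {F : Finset (Finset α)} (hF : IsAntichain (· ⊆ ·) (F : Set (Finset α))) {A B : Finset α}
    (h : (A, B) ∈ orderedPairs i F) : i + 2 ≤ Fintype.card α := by
  obtain ⟨hA, hB, hAB, rfl⟩ := mem_orderedPairs.1 h
  have hA' : #(A ∩ B) < #A :=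
    card_lt_card (inter_subset_left.ssubset_of_ne (mt inter_eq_left.1 (hF hA hB hAB)))
  have hB' : #(A ∩ B) < #B :=
    card_lt_card (inter_subset_right.ssubset_of_ne (mt inter_eq_right.1 (hF hB hA hAB.symm)))
  have := card_add_card_sub_card_inter_le A B
  omega

section ReferencePair

variable {n : ℕ}

def initSeg (n k : ℕ) : Finset (Fin n) := {x | (x : ℕ) < k}

/-- The second set of the reference pair of shape `(i, a, b)`: it has `b` elements and meets
`initSeg n a` in `initSeg n i`. -/
def secondSeg (n i a b : ℕ) : Finset (Fin n) :=
  initSeg n i ∪ (initSeg n (a + b - i) \ initSeg n a)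

theorem card_initSeg {k : ℕ} (hk : k ≤ n) : #(initSeg n k) = k := by
  rw [initSeg, Fin.card_filter_val_lt, min_eq_right hk]

theorem initSeg_mono : Monotone (initSeg n) := fun k l h x => by
  simp only [initSeg, mem_filter, mem_univ, true_and]
  omega

theorem secondSeg_mono (i a : ℕ) : Monotone (secondSeg n i a) := fun _ _ h =>
  union_subset_union subset_rfl (sdiff_subset_sdiff (initSeg_mono (by omega)) subset_rfl)

theorem initSeg_inter_secondSeg {i a b : ℕ} (h : i ≤ a) :
    initSeg n a ∩ secondSeg n i a b = initSeg n i := by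
  ext x
  simp only [initSeg, secondSeg, mem_inter, mem_union, mem_sdiff, mem_filter, mem_univ, true_and]
  omega

theorem card_secondSeg {i a b : ℕ} (hia : i ≤ a) (hib : i ≤ b) (h : a + b - i ≤ n) :
    #(secondSeg n i a b) = b := by
  rw [secondSeg,
    card_union_of_disjoint (disjoint_of_subset_left (initSeg_mono hia) disjoint_sdiff),
    card_sdiff_of_subset (initSeg_mono (by omega)), card_initSeg (by omega), card_initSeg h,
    card_initSeg (by omega)]
  omega

def compatPerms (i : ℕ) (p : Finset (Fin n) × Finset (Fin n)) : Finset (Equiv.Perm (Fin n)) :=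
  {σ | (initSeg n #p.1).map σ.toEmbedding = p.1 ∧
    (secondSeg n i #p.1 #p.2).map σ.toEmbedding = p.2}

theorem card_compatPerms {i : ℕ} {A B : Finset (Fin n)} (h : #(A ∩ B) = i) :
    #(compatPerms i (A, B)) = i ! * (#A - i)! * (#B - i)! * (n - (#A + #B - i))! := by
  have hiA : i ≤ #A := h ▸ card_le_card inter_subset_left
  have hiB : i ≤ #B := h ▸ card_le_card inter_subset_right
  have hAB : #A + #B - i ≤ n := by simpa [h] using card_add_card_sub_card_inter_le A B
  have hA : #(initSeg n #A) = #A := card_initSeg (by omega)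
  rw [compatPerms, card_perm_map_eq_and_map_eq hA (card_secondSeg hiA hiB hAB)
    (by rw [initSeg_inter_secondSeg hiA, card_initSeg (by omega), h]), h, Fintype.card_fin]

theorem mul_balancedTripleFactorial_le_card_compatPerms {i : ℕ} {A B : Finset (Fin n)}
    (h : #(A ∩ B) = i) : i ! * balancedTripleFactorial (n - i) ≤ #(compatPerms i (A, B)) := by
  have hiA : i ≤ #A := h ▸ card_le_card inter_subset_left
  have hiB : i ≤ #B := h ▸ card_le_card inter_subset_right
  have hAB : #A + #B - i ≤ n := by simpa [h] using card_add_card_sub_card_inter_le A B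
  rw [card_compatPerms h, mul_assoc, mul_assoc, ← mul_assoc (#A - i)!]
  gcongr
  calc balancedTripleFactorial (n - i)
      = balancedTripleFactorial ((#A - i) + (#B - i) + (n - (#A + #B - i))) := by
        congr 1
        omega
    _ ≤ _ := balancedTripleFactorial_le _ _ _

theorem pairwiseDisjoint_compatPerms {i : ℕ} {F : Finset (Finset (Fin n))}
    (hF : IsAntichain (· ⊆ ·) (F : Set (Finset (Fin n)))) :
    (↑(orderedPairs i F) : Set (Finset (Fin n) × Finset (Fin n))).PairwiseDisjoint
      (compatPerms i) := by
  rintro ⟨A, B⟩ hp ⟨A', B'⟩ hq hne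
  refine disjoint_left.2 fun σ hσ hσ' => hne ?_
  simp only [compatPerms, mem_filter, mem_univ, true_and] at hσ hσ'
  obtain ⟨hA, hB, -⟩ := mem_orderedPairs.1 hp
  obtain ⟨hA', hB', -⟩ := mem_orderedPairs.1 hq
  obtain rfl : A = A' := hσ.1.symm.trans <| (hσ'.1 ▸
    hF.map_eq_map_of_monotone initSeg_mono _ (hσ.1.symm ▸ hA) (hσ'.1.symm ▸ hA'))
  obtain rfl : B = B' := hσ.2.symm.trans <| (hσ'.2 ▸
    hF.map_eq_map_of_monotone (secondSeg_mono i #A) _ (hσ.2.symm ▸ hB) (hσ'.2.symm ▸ hB'))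
  rfl

theorem exists_mem_compatPerms_level {i j : ℕ} (hij : i < j) (hjn : j + j - i ≤ n)
    (σ : Equiv.Perm (Fin n)) : ∃ p ∈ orderedPairs i (level n j), σ ∈ compatPerms i p := by
  set A := (initSeg n j).map σ.toEmbedding
  set B := (secondSeg n i j j).map σ.toEmbedding
  have hA : #A = j := by rw [card_map, card_initSeg (by omega)]
  have hB : #B = j := by rw [card_map, card_secondSeg hij.le hij.le hjn]
  have hAB : #(A ∩ B) = i := by
    rw [← map_inter, card_map, initSeg_inter_secondSeg hij.le, card_initSeg (by omega)]
  refine ⟨(A, B), mem_orderedPairs.2 ⟨by simpa [level], by simpa [level], ?_, hAB⟩, ?_⟩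
  · rintro hAB'
    rw [hAB', inter_self, hB] at hAB
    omega
  · simp [compatPerms, hA, hB, A, B]

end ReferencePair

theorem card_orderedPairs_mul_le {n i : ℕ} {F : Finset (Finset (Fin n))}
    (hF : IsAntichain (· ⊆ ·) (F : Set (Finset (Fin n)))) :
    #(orderedPairs i F) * (i ! * balancedTripleFactorial (n - i)) ≤ n ! := by
  calc #(orderedPairs i F) * (i ! * balancedTripleFactorial (n - i))
      ≤ ∑ p ∈ orderedPairs i F, #(compatPerms i p) := by
        rw [← smul_eq_mul]
        exact card_nsmul_le_sum _ _ _ fun p hp =>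
          mul_balancedTripleFactorial_le_card_compatPerms (mem_orderedPairs.1 hp).2.2.2
    _ = #((orderedPairs i F).biUnion (compatPerms i)) :=
        (card_biUnion (pairwiseDisjoint_compatPerms hF)).symm
    _ ≤ n ! := by
        simpa [Fintype.card_perm] using card_le_univ ((orderedPairs i F).biUnion (compatPerms i))

theorem card_orderedPairs_level_mul {n i j : ℕ} (hij : i < j) (hjn : j + j - i ≤ n) :
    #(orderedPairs i (level n j)) * (i ! * (j - i)! * (j - i)! * (n - (j + j - i))!) = n ! := by
  calc #(orderedPairs i (level n j)) * (i ! * (j - i)! * (j - i)! * (n - (j + j - i))!)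
      = ∑ p ∈ orderedPairs i (level n j), #(compatPerms i p) := by
        rw [← smul_eq_mul, ← sum_const]
        refine sum_congr rfl fun ⟨A, B⟩ hp => ?_
        obtain ⟨hA, hB, -, hi⟩ := mem_orderedPairs.1 hp
        rw [card_compatPerms hi, (mem_filter.1 hA).2, (mem_filter.1 hB).2]
    _ = #((orderedPairs i (level n j)).biUnion (compatPerms i)) :=
        (card_biUnion (pairwiseDisjoint_compatPerms (isAntichain_level n j))).symm
    _ = n ! := by
        rw [eq_univ_of_forall fun σ => mem_biUnion.2 (exists_mem_compatPerms_level hij hjn σ)]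
        simp [Fintype.card_perm]

theorem statement10_general (n : ℕ) (i : ℕ)
    (F : Finset (Finset (Fin n)))
    (hF : IsAntichain (· ⊆ ·) (↑F : Set (Finset (Fin n)))) :
    betaCount 2 n i F ≤
      betaCount 2 n i (level n
        (if (n - i) % 3 = 2 then i + ((n - i) + 2) / 3 else i + (n - i) / 3)) := by
  set j := if (n - i) % 3 = 2 then i + ((n - i) + 2) / 3 else i + (n - i) / 3 with hj
  rw [← Nat.mul_le_mul_left_iff two_pos, ← card_orderedPairs_eq_two_mul_betaCount,
    ← card_orderedPairs_eq_two_mul_betaCount]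
  rcases lt_or_ge n (i + 2) with hsmall | hlarge
  · rw [eq_empty_of_forall_notMem fun (p : Finset (Fin n) × Finset (Fin n)) hp =>
      ((add_two_le_of_mem_orderedPairs hF hp).trans_eq (Fintype.card_fin n)).not_gt hsmall]
    simp
  have hij : i < j := by split_ifs at hj <;> omega
  have hjn : j + j - i ≤ n := by split_ifs at hj <;> omega
  have hlevel : i ! * (j - i)! * (j - i)! * (n - (j + j - i))! =
      i ! * balancedTripleFactorial (n - i) := by
    split_ifs at hj
    · rw [show n - i = (n - (j + j - i)) + (j - i) + (j - i) by omega,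
        balancedTripleFactorial_eq (by omega) le_rfl (by omega)]
      ring
    · rw [show n - i = (j - i) + (j - i) + (n - (j + j - i)) by omega,
        balancedTripleFactorial_eq le_rfl (by omega) (by omega)]
      ring
  have hcount := card_orderedPairs_level_mul hij hjn
  rw [hlevel] at hcount
  exact Nat.le_of_mul_le_mul_right ((card_orderedPairs_mul_le hF).trans hcount.ge)
    (mul_pos (Nat.factorial_pos i) (by unfold balancedTripleFactorial; positivity))

theorem statement10 (n : ℕ) (hn : 1 ≤ n) (i : ℕ) (hi : i ≤ n)
    (F : Finset (Finset (Fin n)))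
    (hF : IsAntichain (· ⊆ ·) (↑F : Set (Finset (Fin n)))) :
    betaCount 2 n i F ≤
      betaCount 2 n i (level n
        (if (n - i) % 3 = 2 then i + ((n - i) + 2) / 3 else i + (n - i) / 3)) :=
  statement10_general n i F hF
end
end
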